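/- arXiv:1509.05535 — 10 statements merged into one kernel-verified Lean document; each statement's English description precedes it below -/
import Mathlib

section
/- Let 𝒢 be a sequence of covers G₀ ←φ₀− G₁ ←φ₁− G₂ ←φ₂− ⋯. Then V_𝒢 is a non-empty compact metrizable zero-dimensional space, and the relation E_𝒢 is the graph of a continuous surjective map from V_𝒢 onto itself (i.e., for every x ∈ V_𝒢 there is exactly one y ∈ V_𝒢 with (x,y) ∈ E_𝒢, the resulting map x ↦ y is continuous, and it maps V_𝒢 onto V_𝒢). -/
open Filter Topology
open scoped ENNReal

/-- `φ` is a graph homomorphism from `(V₁,E₁)` to `(V₂,E₂)`. -/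
def IsGraphHom {V₁ V₂ : Type*} (E₁ : V₁ → V₁ → Prop) (E₂ : V₂ → V₂ → Prop)
    (φ : V₁ → V₂) : Prop :=
  ∀ u v, E₁ u v → E₂ (φ u) (φ v)

/-- `φ` is edge surjective. -/
def IsEdgeSurj {V₁ V₂ : Type*} (E₁ : V₁ → V₁ → Prop) (E₂ : V₂ → V₂ → Prop)
    (φ : V₁ → V₂) : Prop :=
  ∀ u v, E₂ u v → ∃ u' v', E₁ u' v' ∧ φ u' = u ∧ φ v' = v

/-- `φ` is +directional. -/
def IsPlusDirectional {V₁ V₂ : Type*} (E₁ : V₁ → V₁ → Prop) (φ : V₁ → V₂) : Prop :=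
  ∀ u v v', E₁ u v → E₁ u v' → φ v = φ v'

/-- `φ` is bidirectional. -/
def IsBidirectional {V₁ V₂ : Type*} (E₁ : V₁ → V₁ → Prop) (φ : V₁ → V₂) : Prop :=
  IsPlusDirectional E₁ φ ∧ ∀ u u' v, E₁ u v → E₁ u' v → φ u = φ u'

/-- `φ` is a cover: a +directional edge-surjective graph homomorphism. -/
def IsCover {V₁ V₂ : Type*} (E₁ : V₁ → V₁ → Prop) (E₂ : V₂ → V₂ → Prop)
    (φ : V₁ → V₂) : Prop :=
  IsGraphHom E₁ E₂ φ ∧ IsPlusDirectional E₁ φ ∧ IsEdgeSurj E₁ E₂ φ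

/-- every vertex has an incoming and an outgoing edge. -/
def IsSurjDigraph {V : Type*} (E : V → V → Prop) : Prop :=
  (∀ v, ∃ u, E u v) ∧ ∀ u, ∃ v, E u v

/-- the inverse limit `V_𝒢` of a sequence of graph maps. -/
abbrev InvLim (V : ℕ → Type*) (φ : ∀ n, V (n + 1) → V n) : Type _ :=
  { x : ∀ n, V n // ∀ n, φ n (x (n + 1)) = x n }

/-- the relation `E_𝒢` on `V_𝒢`. -/
def ERel {V : ℕ → Type*} (E : ∀ n, V n → V n → Prop) (φ : ∀ n, V (n + 1) → V n)
    (x y : InvLim V φ) : Prop :=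
  ∀ n, E n (x.1 n) (y.1 n)

/-- the product-of-discrete topology on the inverse limit, given explicitly. -/
def invLimTop (V : ℕ → Type*) (φ : ∀ n, V (n + 1) → V n) :
    TopologicalSpace (InvLim V φ) :=
  @instTopologicalSpaceSubtype _ _ (@Pi.topologicalSpace ℕ V fun _ => ⊥)

/-- the distance function of an explicitly given metric space structure. -/
noncomputable def mdist {X : Type*} (m : MetricSpace X) (x y : X) : ℝ :=
  @dist X m.toDist x y

/-- the topology induced by an explicitly given metric space structure. -/
def mtop {X : Type*} (m : MetricSpace X) : TopologicalSpace X :=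
  @UniformSpace.toTopologicalSpace X m.toUniformSpace

/-- the (half-open) list of vertices `vtx i 0, vtx i 1, …, vtx i (len-1)` of
the circuit `c_{n,i}`, the final vertex (equal to the initial one) omitted. -/
def circList {Vn : Type*} (vtx : ℕ → ℕ → Vn) (i len : ℕ) : List Vn :=
  List.ofFn fun j : Fin len => vtx i (j : ℕ)

/-! The inverse limit is a closed subset of the countable product of the finite discrete
spaces `V n`, hence compact, metrizable and totally disconnected, and it is nonempty by König's
lemma. Since `φ n` is +directional, all out-neighbours of `x (n + 1)` project to one vertex of
level `n`; these projections form the unique `E_𝒢`-successor of `x`, whose `n`-th coordinate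
depends only on `x (n + 1)`, hence continuously on `x`. A predecessor of `y` is a point of the
inverse limit of the finite nonempty sets of in-neighbours of the `y n`, again found by König's
lemma. -/

namespace InvLim

variable {V : ℕ → Type*} {φ : ∀ n, V (n + 1) → V n}

open CategoryTheory in
theorem nonempty_of_finite [∀ n, Finite (V n)] [∀ n, Nonempty (V n)] :
    Nonempty (InvLim V φ) := by
  let F : ℕᵒᵖ ⥤ Type _ := Functor.ofOpSequence (X := V) fun n => TypeCat.ofHom (φ n)
  have : ∀ j, Finite (F.obj j) := fun j => inferInstanceAs (Finite (V j.unop))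
  have : ∀ j, Nonempty (F.obj j) := fun j => inferInstanceAs (Nonempty (V j.unop))
  obtain ⟨u, hu⟩ := nonempty_sections_of_finite_inverse_system F
  refine ⟨⟨fun n => u ⟨n⟩, fun n => ?_⟩⟩
  have h := hu (homOfLE (Nat.le_add_right n 1)).op
  simp only [F, Functor.ofOpSequence_map_homOfLE_succ] at h
  exact h

theorem isClosed_setOf_compat [∀ n, TopologicalSpace (V n)] [∀ n, T2Space (V n)]
    (hφ : ∀ n, Continuous (φ n)) :
    IsClosed {x : ∀ n, V n | ∀ n, φ n (x (n + 1)) = x n} := by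
  simp only [Set.ofPred_forall]
  exact isClosed_iInter fun n =>
    isClosed_eq ((hφ n).comp (continuous_apply _)) (continuous_apply n)

theorem compactSpace [∀ n, TopologicalSpace (V n)] [∀ n, T2Space (V n)]
    [∀ n, CompactSpace (V n)] (hφ : ∀ n, Continuous (φ n)) : CompactSpace (InvLim V φ) :=
  isCompact_iff_compactSpace.mp (isClosed_setOf_compat hφ).isCompact

variable {E : ∀ n, V n → V n → Prop}

theorem exists_eRel_left [∀ n, Finite (V n)] (hin : ∀ n v, ∃ u, E n u v)
    (hhom : ∀ n, IsGraphHom (E (n + 1)) (E n) (φ n)) (y : InvLim V φ) :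
    ∃ x, ERel E φ x y := by
  let W n := {u : V n // E n u (y.1 n)}
  have : ∀ n, Nonempty (W n) := fun n => nonempty_subtype.mpr (hin n (y.1 n))
  let ψ n (u : W (n + 1)) : W n := ⟨φ n u.1, y.2 n ▸ hhom n _ _ u.2⟩
  obtain ⟨z⟩ := nonempty_of_finite (V := W) (φ := ψ)
  exact ⟨⟨fun n => (z.1 n).1, fun n => congrArg Subtype.val (z.2 n)⟩, fun n => (z.1 n).2⟩

theorem eq_of_eRel_of_eRel (hdir : ∀ n, IsPlusDirectional (E (n + 1)) (φ n))
    {x y y' : InvLim V φ} (hy : ERel E φ x y) (hy' : ERel E φ x y') : y = y' :=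
  Subtype.ext <| funext fun n => by
    rw [← y.2 n, ← y'.2 n]
    exact hdir n _ _ _ (hy (n + 1)) (hy' (n + 1))

section Next

variable (hhom : ∀ n, IsGraphHom (E (n + 1)) (E n) (φ n))
  (hdir : ∀ n, IsPlusDirectional (E (n + 1)) (φ n))
  {succ : ∀ n, V n → V n} (hsucc : ∀ n v, E n v (succ n v))

include hhom hsucc in
theorem eRel_map_succ (x : InvLim V φ) (n : ℕ) :
    E n (x.1 n) (φ n (succ (n + 1) (x.1 (n + 1)))) :=
  x.2 n ▸ hhom n _ _ (hsucc (n + 1) _)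

def next (x : InvLim V φ) : InvLim V φ :=
  ⟨fun n => φ n (succ (n + 1) (x.1 (n + 1))), fun n =>
    hdir n _ _ _ (eRel_map_succ hhom hsucc x (n + 1)) (hsucc (n + 1) (x.1 (n + 1)))⟩

theorem eRel_iff_next_eq (x y : InvLim V φ) : ERel E φ x y ↔ next hhom hdir hsucc x = y :=
  ⟨fun h => eq_of_eRel_of_eRel hdir (eRel_map_succ hhom hsucc x) h,
    fun h => h ▸ eRel_map_succ hhom hsucc x⟩

theorem continuous_next [∀ n, TopologicalSpace (V n)] [∀ n, DiscreteTopology (V n)] :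
    Continuous (next hhom hdir hsucc) :=
  (continuous_pi fun n => (continuous_of_discreteTopology (f := φ n ∘ succ (n + 1))).comp
    ((continuous_apply (n + 1)).comp continuous_subtype_val)).subtype_mk _

theorem surjective_next [∀ n, Finite (V n)] (hin : ∀ n v, ∃ u, E n u v) :
    Function.Surjective (next hhom hdir hsucc) := fun y =>
  (exists_eRel_left hin hhom y).imp fun x => (eRel_iff_next_eq hhom hdir hsucc x y).mp

end Next

end InvLim

theorem stmt0
    (V : ℕ → Type) [∀ n, TopologicalSpace (V n)] [∀ n, DiscreteTopology (V n)]
    [∀ n, Fintype (V n)] [∀ n, Nonempty (V n)]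
    (E : ∀ n, V n → V n → Prop) (φ : ∀ n, V (n + 1) → V n)
    (hgraph : ∀ n, IsSurjDigraph (E n))
    (hcov : ∀ n, IsCover (E (n + 1)) (E n) (φ n)) :
    Nonempty (InvLim V φ) ∧ CompactSpace (InvLim V φ) ∧
      TopologicalSpace.MetrizableSpace (InvLim V φ) ∧
      TopologicalSpace.IsTopologicalBasis {s : Set (InvLim V φ) | IsClopen s} ∧
      ∃ g : InvLim V φ → InvLim V φ,
        (∀ x y, ERel E φ x y ↔ g x = y) ∧ Continuous g ∧ Function.Surjective g := by
  have hcompact := InvLim.compactSpace (φ := φ) fun _ => continuous_of_discreteTopology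
  choose succ hsucc using fun n => (hgraph n).2
  have hhom n := (hcov n).1
  have hdir n := (hcov n).2.1
  exact ⟨InvLim.nonempty_of_finite, hcompact,
    IsEmbedding.subtypeVal.metrizableSpace, isTopologicalBasis_isClopen,
    InvLim.next hhom hdir hsucc, InvLim.eRel_iff_next_eq hhom hdir hsucc,
    InvLim.continuous_next hhom hdir hsucc,
    InvLim.surjective_next hhom hdir hsucc fun n => (hgraph n).1⟩
end

section
/- Let 𝒢 be a sequence of covers G₀ ←φ₀− G₁ ←φ₁− G₂ ←φ₂− ⋯ in which every φᵢ is bidirectional. Then the continuous surjection of V_𝒢 determined by E_𝒢 (the unique map g with (x,g(x)) ∈ E_𝒢 for all x) is a homeomorphism of V_𝒢 onto itself. -/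
open Filter Topology
open scoped ENNReal

/-!
Coordinate `n` of an `E_𝒢`-successor `y` of `x` is `φₙ(y_{n+1})`, and by +directionality
this depends only on `x_{n+1}`. Hence successors are unique, and the successor map is continuous
since each of its coordinates depends on a single coordinate of its argument. Bidirectionality
says that the reversed graphs satisfy the same hypotheses, so the same argument applied to them
yields a continuous predecessor map, which is the inverse of the successor map.
-/

namespace ERel

variable {V : ℕ → Type*} {E : ∀ n, V n → V n → Prop} {φ : ∀ n, V (n + 1) → V n}

theorem val_eq_of_val_succ_eq (hplus : ∀ n, IsPlusDirectional (E (n + 1)) (φ n))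
    {x x' y y' : InvLim V φ} (hy : ERel E φ x y) (hy' : ERel E φ x' y') {n : ℕ}
    (hx : x.1 (n + 1) = x'.1 (n + 1)) : y.1 n = y'.1 n := by
  rw [← y.2 n, ← y'.2 n]
  exact hplus n _ _ _ (hx ▸ hy (n + 1)) (hy' (n + 1))

theorem unique (hplus : ∀ n, IsPlusDirectional (E (n + 1)) (φ n))
    {x y y' : InvLim V φ} (hy : ERel E φ x y) (hy' : ERel E φ x y') : y = y' :=
  Subtype.ext <| funext fun _ => val_eq_of_val_succ_eq hplus hy hy' rfl

theorem exists_succ (hout : ∀ n u, ∃ v, E n u v)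
    (hhom : ∀ n, IsGraphHom (E (n + 1)) (E n) (φ n))
    (hplus : ∀ n, IsPlusDirectional (E (n + 1)) (φ n)) (x : InvLim V φ) :
    ∃ y, ERel E φ x y := by
  choose out hout using hout
  have hedge : ∀ n, E n (x.1 n) (φ n (out (n + 1) (x.1 (n + 1)))) := fun n =>
    x.2 n ▸ hhom n _ _ (hout (n + 1) _)
  exact ⟨⟨fun n => φ n (out (n + 1) (x.1 (n + 1))),
    fun n => hplus n (x.1 (n + 1)) _ _ (hedge (n + 1)) (hout (n + 1) _)⟩, hedge⟩

theorem continuous_of_forall_rel [∀ n, TopologicalSpace (V n)] [∀ n, DiscreteTopology (V n)]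
    (hplus : ∀ n, IsPlusDirectional (E (n + 1)) (φ n)) {g : InvLim V φ → InvLim V φ}
    (hg : ∀ x, ERel E φ x (g x)) : Continuous g := by
  refine Continuous.subtype_mk (continuous_pi fun n => ?_) _
  refine IsLocallyConstant.continuous <| (IsLocallyConstant.iff_eventually_eq _).2 fun x => ?_
  have hcoord : Continuous fun x' : InvLim V φ => x'.1 (n + 1) :=
    (continuous_apply (n + 1)).comp continuous_subtype_val
  filter_upwards [hcoord.continuousAt (isOpen_discrete {x.1 (n + 1)} |>.mem_nhds rfl)]
    with x' hx'
  exact val_eq_of_val_succ_eq hplus (hg x') (hg x) hx'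

theorem exists_continuous_function [∀ n, TopologicalSpace (V n)] [∀ n, DiscreteTopology (V n)]
    (hout : ∀ n u, ∃ v, E n u v) (hhom : ∀ n, IsGraphHom (E (n + 1)) (E n) (φ n))
    (hplus : ∀ n, IsPlusDirectional (E (n + 1)) (φ n)) :
    ∃ g : InvLim V φ → InvLim V φ, (∀ x y, ERel E φ x y ↔ g x = y) ∧ Continuous g := by
  choose g hg using exists_succ hout hhom hplus
  exact ⟨g, fun x y => ⟨unique hplus (hg x), (· ▸ hg x)⟩, continuous_of_forall_rel hplus hg⟩

end ERel

theorem stmt1_general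
    (V : ℕ → Type) [∀ n, TopologicalSpace (V n)] [∀ n, DiscreteTopology (V n)]
    (E : ∀ n, V n → V n → Prop) (φ : ∀ n, V (n + 1) → V n)
    (hgraph : ∀ n, IsSurjDigraph (E n))
    (hcov : ∀ n, IsCover (E (n + 1)) (E n) (φ n))
    (hbi : ∀ n, IsBidirectional (E (n + 1)) (φ n)) :
    ∃ g : InvLim V φ → InvLim V φ,
      (∀ x y, ERel E φ x y ↔ g x = y) ∧ IsHomeomorph g := by
  obtain ⟨g, hg, cg⟩ := ERel.exists_continuous_function (fun n => (hgraph n).2)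
    (fun n => (hcov n).1) (fun n => (hcov n).2.1)
  obtain ⟨h, hh, ch⟩ := ERel.exists_continuous_function (E := fun n => flip (E n)) (φ := φ)
    (fun n => (hgraph n).1) (fun n u v huv => (hcov n).1 v u huv)
    (fun n u v v' => (hbi n).2 v v' u)
  have hgh : ∀ y, g (h y) = y := fun y => (hg _ _).1 ((hh y _).2 rfl)
  have hhg : ∀ x, h (g x) = x := fun x => (hh _ _).1 ((hg x _).2 rfl)
  exact ⟨g, hg, (Homeomorph.mk ⟨g, h, hhg, hgh⟩ cg ch).isHomeomorph⟩

theorem stmt1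
    (V : ℕ → Type) [∀ n, TopologicalSpace (V n)] [∀ n, DiscreteTopology (V n)]
    [∀ n, Fintype (V n)] [∀ n, Nonempty (V n)]
    (E : ∀ n, V n → V n → Prop) (φ : ∀ n, V (n + 1) → V n)
    (hgraph : ∀ n, IsSurjDigraph (E n))
    (hcov : ∀ n, IsCover (E (n + 1)) (E n) (φ n))
    (hbi : ∀ n, IsBidirectional (E (n + 1)) (φ n)) :
    ∃ g : InvLim V φ → InvLim V φ,
      (∀ x y, ERel E φ x y ↔ g x = y) ∧ IsHomeomorph g :=
  stmt1_general V E φ hgraph hcov hbi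
end

section
/- Every zero-dimensional system is topologically conjugate to the inverse limit of some sequence of covers: if X is a non-empty compact metrizable zero-dimensional space and f : X → X is a continuous surjection, then there exists a sequence 𝒢 of covers G₀ ←φ₀− G₁ ←φ₁− ⋯ and a homeomorphism h : X → V_𝒢 such that h ∘ f = g ∘ h, where g is the continuous surjection of V_𝒢 determined by E_𝒢. -/
/-!
Choose discrete quotients `Q n` of `X` that together separate points (one for each member of a
countable clopen basis) and refine them along `f`: `S (n + 1) = Q (n + 1) ⊓ S n ⊓ f⁻¹ (S n)`.
Take the classes of `S n` as the vertices of `Gₙ`, with an edge `u → v` whenever some `x ∈ u`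
has `f x ∈ v`. Because `S (n + 1)` refines `f⁻¹ (S n)`, the level-`(n + 1)` class of `x`
determines the level-`n` class of `f x`, which is exactly +directionality of the bonding maps.
By compactness `x ↦ ([x]ₙ)ₙ` is a homeomorphism `X ≃ₜ V_𝒢`, and edges `[a]ₙ → [b]ₙ` at every
level yield a nested sequence of nonempty closed sets whose common point `z` satisfies `z = a`
and `f z = b`; so `E_𝒢` is the graph of the conjugate of `f`.
-/

open Filter Topology
open scoped ENNReal

open Function TopologicalSpace

lemma invLimTop_eq {V : ℕ → Type*} [∀ n, TopologicalSpace (V n)] [∀ n, DiscreteTopology (V n)]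
    (φ : ∀ n, V (n + 1) → V n) : invLimTop V φ = instTopologicalSpaceSubtype := by
  unfold invLimTop
  congr
  funext n
  exact (DiscreteTopology.eq_bot (α := V n)).symm

lemma exists_forall_mem_of_succ_subset {X : Type*} [TopologicalSpace X] [CompactSpace X]
    {K : ℕ → Set X} (hK : ∀ n, K (n + 1) ⊆ K n) (hne : ∀ n, (K n).Nonempty)
    (hcl : ∀ n, IsClosed (K n)) : ∃ x, ∀ n, x ∈ K n := by
  simpa using IsCompact.nonempty_iInter_of_sequence_nonempty_isCompact_isClosed K hK hne
    (hcl 0).isCompact hcl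

namespace DiscreteQuotient

variable {X : Type*} [TopologicalSpace X]

def Transition (f : X → X) (S : DiscreteQuotient X) (u v : S) : Prop :=
  ∃ x, S.proj x = u ∧ S.proj (f x) = v

lemma isSurjDigraph_transition {f : X → X} (hf : Surjective f) (S : DiscreteQuotient X) :
    IsSurjDigraph (S.Transition f) := by
  constructor
  · intro v
    obtain ⟨y, rfl⟩ := S.proj_surjective v
    obtain ⟨x, rfl⟩ := hf y
    exact ⟨S.proj x, x, rfl, rfl⟩
  · intro u
    obtain ⟨x, rfl⟩ := S.proj_surjective u
    exact ⟨S.proj (f x), x, rfl, rfl⟩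

lemma isCover_ofLE_transition {f : C(X, X)} {A B : DiscreteQuotient X} (h : A ≤ B)
    (hf : LEComap f A B) : IsCover (A.Transition f) (B.Transition f) (ofLE h) := by
  refine ⟨?hom, ?plusDirectional, ?edgeSurj⟩
  · rintro _ _ ⟨x, rfl, rfl⟩
    exact ⟨x, ofLE_proj h x, ofLE_proj h (f x)⟩
  · rintro _ _ _ ⟨x, rfl, rfl⟩ ⟨x', hx', rfl⟩
    simp only [ofLE_proj, ← map_proj hf, hx']
  · rintro _ _ ⟨x, rfl, rfl⟩
    exact ⟨A.proj x, A.proj (f x), ⟨x, rfl, rfl⟩, ofLE_proj h x, ofLE_proj h (f x)⟩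

def SeparatesPoints {ι : Type*} (S : ι → DiscreteQuotient X) : Prop :=
  ∀ ⦃x y : X⦄, (∀ i, (S i).proj x = (S i).proj y) → x = y

lemma SeparatesPoints.of_le {ι : Type*} {S Q : ι → DiscreteQuotient X} (hQ : SeparatesPoints Q)
    (hSQ : ∀ i, S i ≤ Q i) : SeparatesPoints S := fun x y hxy =>
  hQ fun i => by rw [← ofLE_proj (hSQ i), hxy i, ofLE_proj]

lemma exists_nat_separatesPoints [SecondCountableTopology X] [T1Space X] [Nonempty X]
    (hX : IsTopologicalBasis {s : Set X | IsClopen s}) :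
    ∃ Q : ℕ → DiscreteQuotient X, SeparatesPoints Q := by
  obtain ⟨B, hB_clopen, hB_countable, hB⟩ := hX.exists_countable
  obtain ⟨U, rfl⟩ := hB_countable.exists_eq_range (Set.Nonempty.of_sUnion_eq_univ hB.sUnion_eq)
  refine ⟨fun n => ofIsClopen (hB_clopen ⟨n, rfl⟩), fun x y hxy => ?_⟩
  by_contra hne
  obtain ⟨_, ⟨n, rfl⟩, hxU, hUy⟩ := hB.exists_subset_of_mem_open hne isOpen_ne
  -- `ofIsClopen` relates `x` and `y` iff `x ∈ U n ↔ y ∈ U n`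
  exact hUy ((Quotient.eq''.mp (hxy n)).mp hxU) rfl

def orbitRefinement (f : C(X, X)) (Q : ℕ → DiscreteQuotient X) : ℕ → DiscreteQuotient X
  | 0 => Q 0
  | n + 1 => Q (n + 1) ⊓ (orbitRefinement f Q n ⊓ (orbitRefinement f Q n).comap f)

section Refinement

variable (f : C(X, X)) (Q : ℕ → DiscreteQuotient X)

lemma orbitRefinement_le (n : ℕ) : orbitRefinement f Q n ≤ Q n := by
  cases n
  · exact le_rfl
  · exact inf_le_left

lemma orbitRefinement_succ_le (n : ℕ) : orbitRefinement f Q (n + 1) ≤ orbitRefinement f Q n :=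
  inf_le_right.trans inf_le_left

lemma leComap_orbitRefinement_succ (n : ℕ) :
    LEComap f (orbitRefinement f Q (n + 1)) (orbitRefinement f Q n) :=
  inf_le_right.trans inf_le_right

end Refinement

section Inverse

variable {S : ℕ → DiscreteQuotient X} (hS : ∀ n, S (n + 1) ≤ S n)

def projLim : X → InvLim (fun n => S n) (fun n => ofLE (hS n)) :=
  fun x => ⟨fun n => (S n).proj x, fun n => ofLE_proj (hS n) x⟩

lemma continuous_projLim : Continuous (projLim hS) :=
  (continuous_pi fun n => (S n).proj_continuous).subtype_mk _

lemma projLim_injective (hsep : SeparatesPoints S) : Injective (projLim hS) :=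
  fun _ _ hxy => hsep fun n => congrFun (congrArg Subtype.val hxy) n

variable [CompactSpace X]

lemma projLim_surjective : Surjective (projLim hS) := by
  rintro ⟨u, hu⟩
  obtain ⟨x, hx⟩ : ∃ x, ∀ n, x ∈ (S n).proj ⁻¹' {u n} := by
    refine exists_forall_mem_of_succ_subset (fun n y hy => ?_)
      (fun n => (S n).proj_surjective (u n)) (fun n => (S n).isClosed_preimage _)
    rw [Set.mem_preimage, Set.mem_singleton_iff] at *
    rw [← ofLE_proj (hS n), hy]
    exact hu n
  exact ⟨x, Subtype.ext (funext hx)⟩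

lemma isHomeomorph_projLim (hsep : SeparatesPoints S) : IsHomeomorph (projLim hS) :=
  isHomeomorph_iff_continuous_bijective.mpr
    ⟨continuous_projLim hS, projLim_injective hS hsep, projLim_surjective hS⟩

lemma eRel_projLim_iff {f : X → X} (hf : Continuous f) (hsep : SeparatesPoints S) {a b : X} :
    ERel (fun n => (S n).Transition f) _ (projLim hS a) (projLim hS b) ↔ f a = b := by
  refine ⟨fun hab => ?_, fun hab n => ⟨a, rfl, congrArg _ hab⟩⟩
  obtain ⟨z, hz⟩ : ∃ z, ∀ n, z ∈ (S n).proj ⁻¹' {(S n).proj a} ∩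
      f ⁻¹' ((S n).proj ⁻¹' {(S n).proj b}) := by
    refine exists_forall_mem_of_succ_subset (fun n z hz => ?_) (fun n => hab n) fun n =>
      ((S n).isClosed_preimage _).inter (((S n).isClosed_preimage _).preimage hf)
    simp only [Set.mem_inter_iff, Set.mem_preimage, Set.mem_singleton_iff,
      ← ofLE_proj (hS n)] at hz ⊢
    rw [hz.1, hz.2]
    exact ⟨rfl, rfl⟩
  obtain rfl : z = a := hsep fun n => (hz n).1
  exact hsep fun n => (hz n).2

end Inverse

end DiscreteQuotient

open DiscreteQuotient

theorem stmt2
    (X : Type) [TopologicalSpace X] [CompactSpace X]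
    [TopologicalSpace.MetrizableSpace X] [Nonempty X]
    (hX : TopologicalSpace.IsTopologicalBasis {s : Set X | IsClopen s})
    (f : X → X) (hfc : Continuous f) (hfs : Function.Surjective f) :
    ∃ (V : ℕ → Type) (_ : ∀ n, Fintype (V n)) (E : ∀ n, V n → V n → Prop)
      (φ : ∀ n, V (n + 1) → V n),
      (∀ n, Nonempty (V n)) ∧ (∀ n, IsSurjDigraph (E n)) ∧
      (∀ n, IsCover (E (n + 1)) (E n) (φ n)) ∧
      ∃ g : InvLim V φ → InvLim V φ,
        (∀ x y, ERel E φ x y ↔ g x = y) ∧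
        Continuous[invLimTop V φ, invLimTop V φ] g ∧ Function.Surjective g ∧
        ∃ h : X → InvLim V φ, @IsHomeomorph X (InvLim V φ) _ (invLimTop V φ) h ∧
          ∀ x, h (f x) = g (h x) := by
  obtain ⟨Q, hQ⟩ := exists_nat_separatesPoints hX
  let F : C(X, X) := ⟨f, hfc⟩
  let S := orbitRefinement F Q
  have hS := orbitRefinement_succ_le F Q
  have hsep : SeparatesPoints S := hQ.of_le (orbitRefinement_le F Q)
  let e := (isHomeomorph_projLim hS hsep).homeomorph
  refine ⟨fun n => S n, fun n => Fintype.ofFinite _, fun n => (S n).Transition f,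
    fun n => ofLE (hS n), fun n => inferInstance, fun n => isSurjDigraph_transition hfs _,
    fun n => isCover_ofLE_transition (hS n) (leComap_orbitRefinement_succ F Q n), ?_⟩
  rw [invLimTop_eq]
  refine ⟨e ∘ f ∘ e.symm, fun x y => ?_, e.continuous.comp (hfc.comp e.symm.continuous),
    e.surjective.comp (hfs.comp e.symm.surjective), e, e.isHomeomorph, fun x => by simp⟩
  obtain ⟨a, rfl⟩ := e.surjective x
  obtain ⟨b, rfl⟩ := e.surjective y
  rw [comp_apply, comp_apply, e.symm_apply_apply, e.injective.eq_iff]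
  exact eRel_projLim_iff hS hfc hsep
end

section
/- In the construction, every graph homomorphism φₙ : G_{n+1} → Gₙ is a bidirectional cover; consequently the induced map f of the inverse limit X = V_𝒢 is a homeomorphism of X onto itself. -/
open Filter Topology
open scoped ENNReal

lemma chain_ofFn_aux {α : Type*} (R : α → α → Prop) :
    ∀ (m : ℕ) (f : ℕ → α) (a : α) (t : List α), 0 < m → R a (f 0) →
      (∀ j, j + 1 < m → R (f j) (f (j + 1))) → List.Chain R (f (m - 1)) t →
      List.Chain R a (List.ofFn (fun i : Fin m => f (i : ℕ)) ++ t) := by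
  intro m
  induction m with
  | zero => intro f a t h; omega
  | succ m ih =>
    intro f a t _ ha hstep ht
    rw [List.ofFn_succ, List.cons_append]
    refine List.Chain.cons ha ?_
    cases m with
    | zero => simpa using ht
    | succ m' =>
      exact ih (fun k => f (k + 1)) (f 0) t (by omega) (hstep 0 (by omega))
        (fun j hj => hstep (j + 1) (by omega)) ht

theorem stmt3
    (V : ℕ → Type) [∀ n, TopologicalSpace (V n)] [∀ n, DiscreteTopology (V n)]
    [∀ n, Fintype (V n)]
    (E : ∀ n, V n → V n → Prop) (φ : ∀ n, V (n + 1) → V n)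
    (len : ℕ → ℕ → ℕ) (v0 : ∀ n, V n) (vtx : ∀ n, ℕ → ℕ → V n)
    (hV0 : ∀ u : V 0, u = v0 0)
    (hE0 : ∀ u v : V 0, E 0 u v ↔ u = v0 0 ∧ v = v0 0)
    (hends : ∀ n i, 1 ≤ i → i ≤ n → vtx n i 0 = v0 n ∧ vtx n i (len n i) = v0 n)
    (hlen2 : ∀ n i, 1 ≤ i → i ≤ n → 2 ≤ len n i)
    (hrec : ∀ n i, 1 ≤ i → i ≤ n →
      len (n + 1) i = 2 + 2 * ∑ j ∈ Finset.Icc i n, len n j)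
    (hne : ∀ n i j, 1 ≤ i → i ≤ n → 0 < j → j < len n i → vtx n i j ≠ v0 n)
    (hinj : ∀ n i j i' j', 1 ≤ i → i ≤ n → 1 ≤ i' → i' ≤ n →
      0 < j → j < len n i → 0 < j' → j' < len n i' →
      vtx n i j = vtx n i' j' → i = i' ∧ j = j')
    (hall : ∀ n, 1 ≤ n → ∀ u : V n,
      u = v0 n ∨ ∃ i j, 1 ≤ i ∧ i ≤ n ∧ 0 < j ∧ j < len n i ∧ u = vtx n i j)
    (hE : ∀ n, 1 ≤ n → ∀ u v : V n, E n u v ↔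
      (u = v0 n ∧ v = v0 n) ∨
      ∃ i j, 1 ≤ i ∧ i ≤ n ∧ j < len n i ∧ u = vtx n i j ∧ v = vtx n i (j + 1))
    (hphi0 : ∀ n, φ n (v0 (n + 1)) = v0 n)
    (hphitop : ∀ n j, j ≤ len (n + 1) (n + 1) → φ n (vtx (n + 1) (n + 1) j) = v0 n)
    (hphiwalk : ∀ n i, 1 ≤ i → i ≤ n →
      List.map (φ n) (circList (vtx (n + 1)) i (len (n + 1) i)) =
        v0 n :: (((List.range' i (n + 1 - i)).flatMap fun k =>
          circList (vtx n) k (len n k) ++ circList (vtx n) k (len n k)) ++ [v0 n])) :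
    (∀ n, IsCover (E (n + 1)) (E n) (φ n) ∧ IsBidirectional (E (n + 1)) (φ n)) ∧
      ∃ g : InvLim V φ → InvLim V φ,
        (∀ x y, ERel E φ x y ↔ g x = y) ∧ IsHomeomorph g := by
  classical
  have hloop : ∀ n, E n (v0 n) (v0 n) := by
    intro n
    match n with
    | 0 => exact (hE0 _ _).mpr ⟨rfl, rfl⟩
    | (m+1) => exact (hE (m+1) (by omega) _ _).mpr (Or.inl ⟨rfl, rfl⟩)
  have hout : ∀ n (u : V n), ∃ v, E n u v := by
    intro n u
    match n with
    | 0 => exact ⟨v0 0, (hE0 _ _).mpr ⟨hV0 u, rfl⟩⟩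
    | (m+1) =>
      rcases hall (m+1) (by omega) u with h | ⟨i, j, h1, h2, _, h4, h5⟩
      · exact ⟨v0 _, by rw [h]; exact hloop _⟩
      · exact ⟨vtx _ i (j+1), (hE (m+1) (by omega) _ _).mpr (Or.inr ⟨i, j, h1, h2, h4, h5, rfl⟩)⟩
  have hin : ∀ n (v : V n), ∃ u, E n u v := by
    intro n v
    match n with
    | 0 => exact ⟨v0 0, (hE0 _ _).mpr ⟨rfl, hV0 v⟩⟩
    | (m+1) =>
      rcases hall (m+1) (by omega) v with h | ⟨i, j, h1, h2, h3, h4, h5⟩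
      · exact ⟨v0 _, by rw [h]; exact hloop _⟩
      · refine ⟨vtx _ i (j-1), (hE (m+1) (by omega) _ _).mpr (Or.inr ⟨i, j-1, h1, h2, by omega, rfl, ?_⟩)⟩
        rw [show j - 1 + 1 = j by omega]; exact h5
  -- the main combinatorial facts about the covering maps on circuits
  have walk : ∀ n i, 1 ≤ i → i ≤ n →
      (∀ j, j ≤ len n i → φ n (vtx (n+1) i (j+1)) = vtx n i j) ∧
      φ n (vtx (n+1) i 0) = v0 n ∧
      φ n (vtx (n+1) i (len (n+1) i - 1)) = v0 n ∧
      (∀ j, j < len (n+1) i → E n (φ n (vtx (n+1) i j)) (φ n (vtx (n+1) i (j+1)))) := by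
    intro n i h1 h2
    have hn1 : 1 ≤ n := le_trans h1 h2
    have hmap := hphiwalk n i h1 h2
    set L := len (n+1) i with hLdef
    set D := (List.range' i (n+1-i)).flatMap
        (fun k => circList (vtx n) k (len n k) ++ circList (vtx n) k (len n k)) with hDdef
    have lenflat : ∀ (m s : ℕ), ((List.range' s m).flatMap
        (fun k => circList (vtx n) k (len n k) ++ circList (vtx n) k (len n k))).length
        = 2 * ∑ j ∈ Finset.Ico s (s+m), len n j := by
      intro m
      induction m with
      | zero => simp
      | succ m ih =>
        intro s
        rw [List.range'_succ, List.flatMap_cons, List.length_append, ih (s+1)]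
        have e2 : (circList (vtx n) s (len n s) ++ circList (vtx n) s (len n s)).length
            = 2 * len n s := by
          rw [List.length_append]; simp [circList]; ring
        have e3 : ∑ j ∈ Finset.Ico s (s+(m+1)), len n j
            = len n s + ∑ j ∈ Finset.Ico (s+1) (s+1+m), len n j := by
          rw [Finset.sum_eq_sum_Ico_succ_bot (by omega : s < s + (m+1)) (len n),
            show s+(m+1) = s+1+m by omega]
        rw [e2, e3]
        ring
    have hDlen : D.length = 2 * ∑ j ∈ Finset.Icc i n, len n j := by
      rw [hDdef, lenflat, show i + (n+1-i) = n+1 by omega, Finset.Ico_add_one_right_eq_Icc]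
    have hL : L = 2 + 2 * ∑ j ∈ Finset.Icc i n, len n j := hrec n i h1 h2
    have hsumi : len n i ≤ ∑ j ∈ Finset.Icc i n, len n j :=
      Finset.single_le_sum (fun _ _ => Nat.zero_le _) (Finset.mem_Icc.mpr ⟨le_refl i, h2⟩)
    have hli := hlen2 n i h1 h2
    have hget : ∀ j, j < L → (v0 n :: (D ++ [v0 n]))[j]? = some (φ n (vtx (n+1) i j)) := by
      intro j hj
      rw [← hmap, List.getElem?_map, circList, List.getElem?_ofFn]
      simp [List.ofFnNthVal, hj]
    have hDdec : D = (circList (vtx n) i (len n i) ++ circList (vtx n) i (len n i)) ++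
        (List.range' (i+1) (n-i)).flatMap
          (fun k => circList (vtx n) k (len n k) ++ circList (vtx n) k (len n k)) := by
      rw [hDdef, show n+1-i = (n-i)+1 by omega, List.range'_succ, List.flatMap_cons]
    have hclen : (circList (vtx n) i (len n i)).length = len n i := by simp [circList]
    -- clause 1
    have hval1 : ∀ j, j ≤ len n i → φ n (vtx (n+1) i (j+1)) = vtx n i j := by
      intro j hj
      have hDj : D[j]? = some (vtx n i j) := by
        rw [hDdec]
        rcases lt_or_eq_of_le hj with hlt | heq
        · rw [List.getElem?_append_left (by rw [List.length_append, hclen]; omega),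
            List.getElem?_append_left (by rw [hclen]; omega)]
          simp [circList, List.getElem?_ofFn, List.ofFnNthVal, hlt]
        · subst heq
          rw [List.getElem?_append_left (by rw [List.length_append, hclen]; omega),
            List.getElem?_append_right (by rw [hclen])]
          simp [circList, List.getElem?_ofFn, List.ofFnNthVal, hclen, (by omega : 0 < len n i),
            (hends n i h1 h2).1, (hends n i h1 h2).2]
      have hjD : j < D.length := by rw [hDlen]; omega
      have h := hget (j+1) (by omega)
      rw [List.getElem?_cons_succ, List.getElem?_append_left hjD, hDj] at h
      exact (Option.some.inj h).symm
    -- clause 2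
    have hval0 : φ n (vtx (n+1) i 0) = v0 n := by
      have h := hget 0 (by omega)
      rw [List.getElem?_cons_zero] at h
      exact (Option.some.inj h).symm
    -- clause 3
    have hvallast : φ n (vtx (n+1) i (L - 1)) = v0 n := by
      have h := hget (L-1) (by omega)
      rw [show L - 1 = D.length + 1 + 1 - 1 from by omega] at h ⊢
      rw [show D.length + 1 + 1 - 1 = D.length + 1 from rfl, List.getElem?_cons_succ,
        List.getElem?_append_right (le_refl _)] at h
      simp at h
      exact h.symm
    -- the chain
    have chainD : ∀ (m s : ℕ), 1 ≤ s → s + m ≤ n + 1 → ∀ (a : V n) (t : List (V n)),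
        E n a (v0 n) → (∀ b, E n b (v0 n) → List.Chain (E n) b t) →
        List.Chain (E n) a (((List.range' s m).flatMap
          (fun k => circList (vtx n) k (len n k) ++ circList (vtx n) k (len n k))) ++ t) := by
      intro m
      induction m with
      | zero => intro s _ _ a t ha htail; simpa using htail a ha
      | succ m ih =>
        intro s hs1 hs2 a t ha htail
        rw [List.range'_succ, List.flatMap_cons, List.append_assoc, List.append_assoc]
        have hsn : s ≤ n := by omega
        have hl2 := hlen2 n s hs1 hsn
        have h0 : vtx n s 0 = v0 n := (hends n s hs1 hsn).1
        have hedge : ∀ j, j + 1 < len n s → E n (vtx n s j) (vtx n s (j+1)) := by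
          intro j hj
          exact (hE n hn1 _ _).mpr (Or.inr ⟨s, j, hs1, hsn, by omega, rfl, rfl⟩)
        have hlast : E n (vtx n s (len n s - 1)) (v0 n) := by
          have h := (hE n hn1 _ _).mpr (Or.inr ⟨s, len n s - 1, hs1, hsn, by omega, rfl, rfl⟩)
          rwa [show len n s - 1 + 1 = len n s by omega, (hends n s hs1 hsn).2] at h
        simp only [circList]
        refine chain_ofFn_aux (E n) (len n s) (vtx n s) a _ (by omega)
          (by rw [h0]; exact ha) hedge ?_
        refine chain_ofFn_aux (E n) (len n s) (vtx n s) _ _ (by omega)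
          (by rw [h0]; exact hlast) hedge ?_
        exact ih (s+1) (by omega) (by omega) _ t hlast htail
    have chainW : List.Chain (E n) (v0 n) (D ++ [v0 n, v0 n]) := by
      rw [hDdef]
      exact chainD (n+1-i) i h1 (by omega) (v0 n) _ (hloop n)
        (fun b hb => List.Chain.cons hb (List.Chain.cons (hloop n) List.Chain.nil))
    have hllen : (D ++ [v0 n, v0 n]).length = L := by
      rw [List.length_append]; simp; omega
    -- shifted values into the chain list
    have hDL : L = D.length + 2 := by omega
    have hphil : ∀ j (hj : j < L), φ n (vtx (n+1) i (j+1)) =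
        (D ++ [v0 n, v0 n]).get ⟨j, by rw [hllen]; exact hj⟩ := by
      intro j hj
      rw [List.get_eq_getElem]
      have hjl : j < (D ++ [v0 n, v0 n]).length := by rw [hllen]; exact hj
      have hsome : (D ++ [v0 n, v0 n])[j]? = some ((D ++ [v0 n, v0 n])[j]'hjl) :=
        List.getElem?_eq_getElem hjl
      rcases Nat.lt_or_ge (j+1) L with hlt | hge
      · have h := hget (j+1) hlt
        rw [List.getElem?_cons_succ] at h
        have e : (D ++ [v0 n, v0 n])[j]? = (D ++ [v0 n])[j]? := by
          rcases Nat.lt_or_ge j D.length with hc | hc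
          · rw [List.getElem?_append_left hc, List.getElem?_append_left hc]
          · have hj' : j = D.length := by omega
            subst hj'
            rw [List.getElem?_append_right (le_refl _), List.getElem?_append_right (le_refl _)]
            simp
        rw [← e, hsome] at h
        exact (Option.some.inj h).symm
      · have hj1 : j + 1 = L := by omega
        have hvL : vtx (n+1) i (j+1) = v0 (n+1) := by
          rw [hj1, hLdef]; exact (hends (n+1) i h1 (by omega)).2
        have e : (D ++ [v0 n, v0 n])[j]? = some (v0 n) := by
          rw [List.getElem?_append_right (by omega : D.length ≤ j),
            show j - D.length = 1 by omega]
          rfl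
        rw [hsome] at e
        rw [hvL, hphi0]
        exact (Option.some.inj e).symm
    -- clause 4
    have hchain4 : ∀ j, j < L → E n (φ n (vtx (n+1) i j)) (φ n (vtx (n+1) i (j+1))) := by
      intro j hj
      obtain ⟨hhead, hpair⟩ : (∀ h : 0 < (D ++ [v0 n, v0 n]).length,
          E n (v0 n) ((D ++ [v0 n, v0 n]).get ⟨0, h⟩)) ∧
          ∀ (i) (h : i < (D ++ [v0 n, v0 n]).length - 1),
            E n ((D ++ [v0 n, v0 n]).get ⟨i, by omega⟩) ((D ++ [v0 n, v0 n]).get ⟨i+1, by omega⟩) := by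
        have hc := List.isChain_iff_getElem.mp
          (show List.IsChain (E n) (v0 n :: (D ++ [v0 n, v0 n])) from chainW)
        refine ⟨fun h => ?_, fun i h => ?_⟩
        · exact hc 0 (by simp)
        · exact hc (i+1) (by simp at h ⊢; omega)
      match j, hj with
      | 0, hj =>
        rw [hval0, hphil 0 hj]
        exact hhead (by rw [hllen]; omega)
      | (j+1), hj =>
        rw [hphil j (by omega), hphil (j+1) hj]
        exact hpair j (by rw [hllen]; omega)
    exact ⟨hval1, hval0, hvallast, hchain4⟩
  
  -- endpoints map to the base vertex
  have hv1 : ∀ n i, 1 ≤ i → i ≤ n + 1 → φ n (vtx (n+1) i 1) = v0 n := by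
    intro n i hi1 hi2
    rcases Nat.lt_or_ge i (n+1) with h | h
    · have h2 : i ≤ n := by omega
      have h3 := (walk n i hi1 h2).1 0 (by omega)
      exact h3.trans (hends n i hi1 h2).1
    · have h2 : i = n+1 := by omega
      subst h2
      exact hphitop n 1 (by have := hlen2 (n+1) (n+1) (by omega) (le_refl _); omega)
  have hvlast : ∀ n i, 1 ≤ i → i ≤ n + 1 → φ n (vtx (n+1) i (len (n+1) i - 1)) = v0 n := by
    intro n i hi1 hi2
    rcases Nat.lt_or_ge i (n+1) with h | h
    · exact (walk n i hi1 (by omega)).2.2.1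
    · have h2 : i = n+1 := by omega
      subst h2
      exact hphitop n _ (by omega)
  have hv0' : ∀ n i, 1 ≤ i → i ≤ n + 1 → vtx (n+1) i 0 = v0 (n+1) :=
    fun n i a b => (hends (n+1) i a b).1
  have part1 : ∀ n, IsCover (E (n+1)) (E n) (φ n) ∧ IsBidirectional (E (n+1)) (φ n) := by
    intro n
    have hhom : IsGraphHom (E (n+1)) (E n) (φ n) := by
      intro u v huv
      rcases (hE (n+1) (by omega) u v).mp huv with ⟨hu, hv⟩ | ⟨i, j, hi1, hi2, hj, hu, hv⟩
      · subst hu; subst hv; rw [hphi0]; exact hloop n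
      · subst hu; subst hv
        rcases Nat.lt_or_ge i (n+1) with hlt | hge
        · exact (walk n i hi1 (by omega)).2.2.2 j hj
        · have hi : i = n+1 := by omega
          subst hi
          rw [hphitop n j (by omega), hphitop n (j+1) (by omega)]
          exact hloop n
    have outval : ∀ w w', E (n+1) w w' → (w = v0 (n+1) ∧ φ n w' = v0 n) ∨
        ∃ i j, 1 ≤ i ∧ i ≤ n+1 ∧ 0 < j ∧ j < len (n+1) i ∧
          w = vtx (n+1) i j ∧ w' = vtx (n+1) i (j+1) := by
      intro w w' hww
      rcases (hE (n+1) (by omega) w w').mp hww with ⟨hu, hv⟩ | ⟨i, j, hi1, hi2, hj, hu, hv⟩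
      · exact Or.inl ⟨hu, by rw [hv, hphi0]⟩
      · rcases Nat.eq_zero_or_pos j with hj0 | hj0
        · subst hj0
          refine Or.inl ⟨by rw [hu]; exact hv0' n i hi1 hi2, ?_⟩
          rw [hv]
          exact hv1 n i hi1 hi2
        · exact Or.inr ⟨i, j, hi1, hi2, hj0, hj, hu, hv⟩
    have inval : ∀ w w', E (n+1) w w' → (w' = v0 (n+1) ∧ φ n w = v0 n) ∨
        ∃ i j, 1 ≤ i ∧ i ≤ n+1 ∧ 0 < j ∧ j < len (n+1) i ∧
          w = vtx (n+1) i (j-1) ∧ w' = vtx (n+1) i j := by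
      intro w w' hww
      rcases (hE (n+1) (by omega) w w').mp hww with ⟨hu, hv⟩ | ⟨i, j, hi1, hi2, hj, hu, hv⟩
      · exact Or.inl ⟨hv, by rw [hu, hphi0]⟩
      · rcases Nat.lt_or_ge (j+1) (len (n+1) i) with hlt | hge
        · exact Or.inr ⟨i, j+1, hi1, hi2, by omega, hlt, by exact hu, hv⟩
        · have hj1 : j + 1 = len (n+1) i := by omega
          refine Or.inl ⟨by rw [hv, hj1]; exact (hends (n+1) i hi1 hi2).2, ?_⟩
          rw [hu, show j = len (n+1) i - 1 by omega]
          exact hvlast n i hi1 hi2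
    have hplus : IsPlusDirectional (E (n+1)) (φ n) := by
      intro u v v' h h'
      rcases outval u v h with ⟨hu, hv⟩ | ⟨i, j, hi1, hi2, hj0, hj, hu, hv⟩
      · rcases outval u v' h' with ⟨hu', hv'⟩ | ⟨i', j', hi1', hi2', hj0', hj', hu', hv'⟩
        · rw [hv, hv']
        · exfalso; exact hne (n+1) i' j' hi1' hi2' hj0' hj' (by rw [← hu']; exact hu)
      · rcases outval u v' h' with ⟨hu', hv'⟩ | ⟨i', j', hi1', hi2', hj0', hj', hu', hv'⟩
        · exfalso; exact hne (n+1) i j hi1 hi2 hj0 hj (by rw [← hu]; exact hu')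
        · obtain ⟨e1, e2⟩ := hinj (n+1) i j i' j' hi1 hi2 hi1' hi2' hj0 hj hj0' hj'
            (by rw [← hu, hu'])
          subst e1; subst e2
          rw [hv, hv']
    have hbid2 : ∀ u u' v, E (n+1) u v → E (n+1) u' v → φ n u = φ n u' := by
      intro u u' v h h'
      rcases inval u v h with ⟨hv, hu⟩ | ⟨i, j, hi1, hi2, hj0, hj, hu, hv⟩
      · rcases inval u' v h' with ⟨hv', hu''⟩ | ⟨i', j', hi1', hi2', hj0', hj', hu'', hv'⟩
        · rw [hu, hu'']
        · exfalso; exact hne (n+1) i' j' hi1' hi2' hj0' hj' (by rw [← hv']; exact hv)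
      · rcases inval u' v h' with ⟨hv', hu''⟩ | ⟨i', j', hi1', hi2', hj0', hj', hu'', hv'⟩
        · exfalso; exact hne (n+1) i j hi1 hi2 hj0 hj (by rw [← hv]; exact hv')
        · obtain ⟨e1, e2⟩ := hinj (n+1) i j i' j' hi1 hi2 hi1' hi2' hj0 hj hj0' hj'
            (by rw [← hv, hv'])
          subst e1; subst e2
          rw [hu, hu'']
    have hesurj : IsEdgeSurj (E (n+1)) (E n) (φ n) := by
      intro u v huv
      rcases Nat.eq_zero_or_pos n with hn | hn
      · subst hn
        refine ⟨v0 1, v0 1, (hE 1 (le_refl 1) _ _).mpr (Or.inl ⟨rfl, rfl⟩), ?_, ?_⟩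
        · rw [hphi0]; exact (hV0 u).symm
        · rw [hphi0]; exact (hV0 v).symm
      · rcases (hE n hn u v).mp huv with ⟨hu, hv⟩ | ⟨k, j, hk1, hk2, hj, hu, hv⟩
        · refine ⟨v0 (n+1), v0 (n+1), (hE (n+1) (by omega) _ _).mpr (Or.inl ⟨rfl, rfl⟩), ?_, ?_⟩
          · rw [hphi0, hu]
          · rw [hphi0, hv]
        · have hlenbig : len n k + 1 < len (n+1) k := by
            have h4 := hrec n k hk1 hk2
            have hs : len n k ≤ ∑ j ∈ Finset.Icc k n, len n j :=
              Finset.single_le_sum (fun _ _ => Nat.zero_le _) (Finset.mem_Icc.mpr ⟨le_refl k, hk2⟩)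
            omega
          refine ⟨vtx (n+1) k (j+1), vtx (n+1) k (j+1+1),
            (hE (n+1) (by omega) _ _).mpr (Or.inr ⟨k, j+1, hk1, by omega, by omega, rfl, rfl⟩),
            ?_, ?_⟩
          · rw [(walk n k hk1 hk2).1 j (by omega), hu]
          · rw [(walk n k hk1 hk2).1 (j+1) (by omega), hv]
    exact ⟨⟨hhom, hplus, hesurj⟩, hplus, hbid2⟩
  -- part 2
  have hhom' : ∀ n, IsGraphHom (E (n+1)) (E n) (φ n) := fun n => (part1 n).1.1
  have hplus' : ∀ n, IsPlusDirectional (E (n+1)) (φ n) := fun n => (part1 n).1.2.1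
  have hbid' : ∀ n, ∀ u u' v, E (n+1) u v → E (n+1) u' v → φ n u = φ n u' :=
    fun n => (part1 n).2.2
  have EXT : ∀ (S : ∀ k, V k → Prop), (∀ k w, S (k+1) w → S k (φ k w)) →
      (∀ k, ∃ w, S k w) → ∃ y : InvLim V φ, ∀ k, S k (y.1 k) := by
    intro S hpush hSne
    have fin : ∀ (m : ℕ) (w : V m), S m w → ∃ x : ∀ k, V k, x m = w ∧
        (∀ k, k < m → φ k (x (k+1)) = x k) ∧ (∀ k, k ≤ m → S k (x k)) := by
      intro m
      induction m with
      | zero =>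
        intro w hw
        refine ⟨Function.update (fun k => v0 k) 0 w, Function.update_self _ _ _, ?_, ?_⟩
        · intro k hk; omega
        · intro k hk
          have hk0 : k = 0 := by omega
          subst hk0
          rw [Function.update_self]
          exact hw
      | succ m ih =>
        intro w hw
        obtain ⟨x, hxm, hxc, hxS⟩ := ih (φ m w) (hpush m w hw)
        refine ⟨Function.update x (m+1) w, Function.update_self _ _ _, ?_, ?_⟩
        · intro k hk
          rw [Function.update_of_ne (by omega : k ≠ m+1)]
          rcases Nat.lt_or_ge k m with hkm | hkm
          · rw [Function.update_of_ne (by omega : k+1 ≠ m+1)]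
            exact hxc k hkm
          · have hk' : k = m := by omega
            subst hk'
            rw [Function.update_self]
            exact hxm.symm
        · intro k hk
          rcases Nat.lt_or_ge k (m+1) with hkm | hkm
          · rw [Function.update_of_ne (by omega : k ≠ m+1)]
            exact hxS k (by omega)
          · have hk' : k = m+1 := by omega
            subst hk'
            rw [Function.update_self]
            exact hw
    set C : ℕ → Set (∀ k, V k) := fun m =>
      {x | (∀ k, k < m → φ k (x (k+1)) = x k) ∧ ∀ k, k ≤ m → S k (x k)} with hC
    have hCne : ∀ m, (C m).Nonempty := by
      intro m
      obtain ⟨w, hw⟩ := hSne m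
      obtain ⟨x, _, h2, h3⟩ := fin m w hw
      exact ⟨x, h2, h3⟩
    have hCsub : ∀ m, C (m+1) ⊆ C m := by
      intro m x hx
      exact ⟨fun k hk => hx.1 k (by omega), fun k hk => hx.2 k (by omega)⟩
    have hCclosed : ∀ m, IsClosed (C m) := by
      intro m
      have e : C m = (⋂ (k : ℕ) (_ : k < m), {x : ∀ k, V k | φ k (x (k+1)) = x k}) ∩
          (⋂ (k : ℕ) (_ : k ≤ m), {x : ∀ k, V k | S k (x k)}) := by
        ext x
        simp only [hC, Set.mem_setOf_eq, Set.mem_inter_iff, Set.mem_iInter]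
      rw [e]
      refine IsClosed.inter ?_ ?_
      · exact isClosed_iInter fun k => isClosed_iInter fun _ =>
          isClosed_eq (continuous_of_discreteTopology.comp (continuous_apply (k+1)))
            (continuous_apply k)
      · exact isClosed_iInter fun k => isClosed_iInter fun _ =>
          IsClosed.preimage (continuous_apply k) (isClosed_discrete _)
    obtain ⟨x, hx⟩ := IsCompact.nonempty_iInter_of_sequence_nonempty_isCompact_isClosed
      C hCsub hCne ((hCclosed 0).isCompact) hCclosed
    simp only [Set.mem_iInter] at hx
    exact ⟨⟨x, fun k => (hx (k+1)).1 k (by omega)⟩, fun k => (hx k).2 k (le_refl k)⟩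
  have hExist : ∀ a : InvLim V φ, ∃ y, ERel E φ a y := by
    intro a
    obtain ⟨y, hy⟩ := EXT (fun k w => E k (a.1 k) w)
      (fun k w h => by have h2 := hhom' k _ _ h; rwa [a.2 k] at h2)
      (fun k => hout k (a.1 k))
    exact ⟨y, hy⟩
  have hUniq : ∀ (a y y' : InvLim V φ), ERel E φ a y → ERel E φ a y' → y = y' := by
    intro a y y' h h'
    apply Subtype.ext
    funext k
    have h2 := hplus' k _ _ _ (h (k+1)) (h' (k+1))
    rwa [y.2 k, y'.2 k] at h2
  choose g hg using hExist
  have hiff : ∀ x y, ERel E φ x y ↔ g x = y := by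
    intro x y
    constructor
    · intro h; exact hUniq x (g x) y (hg x) h
    · intro h; rw [← h]; exact hg x
  have hinjg : Function.Injective g := by
    intro x x' h
    apply Subtype.ext; funext k
    have e1 : E (k+1) (x.1 (k+1)) ((g x).1 (k+1)) := hg x (k+1)
    have e2 : E (k+1) (x'.1 (k+1)) ((g x).1 (k+1)) := by
      rw [h]; exact hg x' (k+1)
    have h3 := hbid' k _ _ _ e1 e2
    rwa [x.2 k, x'.2 k] at h3
  have hsurjg : Function.Surjective g := by
    intro y
    obtain ⟨a, ha⟩ := EXT (fun k w => E k w (y.1 k))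
      (fun k w h => by have h2 := hhom' k _ _ h; rwa [y.2 k] at h2)
      (fun k => hin k (y.1 k))
    exact ⟨a, (hiff a y).mp ha⟩
  have hcontg : Continuous g := by
    have hrep : ∀ (k : ℕ) (x : InvLim V φ),
        (g x).1 k = φ k (Classical.choose (hout (k+1) (x.1 (k+1)))) := by
      intro k x
      have h1 : E (k+1) (x.1 (k+1)) ((g x).1 (k+1)) := hg x (k+1)
      have h2 : E (k+1) (x.1 (k+1)) (Classical.choose (hout (k+1) (x.1 (k+1)))) :=
        Classical.choose_spec (hout (k+1) (x.1 (k+1)))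
      have h3 := hplus' k _ _ _ h1 h2
      rwa [(g x).2 k] at h3
    have hcv : Continuous fun x : InvLim V φ => (g x).1 := by
      refine continuous_pi fun k => ?_
      have e : (fun x : InvLim V φ => (g x).1 k) =
          (fun u : V (k+1) => φ k (Classical.choose (hout (k+1) u))) ∘
            (fun x : InvLim V φ => x.1 (k+1)) := by
        funext x; exact hrep k x
      rw [e]
      exact continuous_of_discreteTopology.comp
        ((continuous_apply (k+1)).comp continuous_subtype_val)
    exact continuous_induced_rng.mpr hcv
  have hsetC : IsClosed {x : ∀ k, V k | ∀ k, φ k (x (k+1)) = x k} := by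
    have e : {x : ∀ k, V k | ∀ k, φ k (x (k+1)) = x k} =
        ⋂ k, {x : ∀ k, V k | φ k (x (k+1)) = x k} := by
      ext x; simp [Set.mem_iInter]
    rw [e]
    exact isClosed_iInter fun k =>
      isClosed_eq (continuous_of_discreteTopology.comp (continuous_apply (k+1)))
        (continuous_apply k)
  haveI : CompactSpace (InvLim V φ) := isCompact_iff_compactSpace.mp hsetC.isCompact
  exact ⟨part1, g, hiff, isHomeomorph_iff_continuous_bijective.mpr ⟨hcontg, hinjg, hsurjg⟩⟩
end

section
/- The Cantor system (X,f) of the construction is topologically transitive: there exists a point x₀ ∈ X whose forward orbit {f^i(x₀) : i ≥ 0} is dense in X. -/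
open Filter Topology
open scoped ENNReal

lemma flat_decomp {V : Type*} (g : ℕ → List V) (N k : ℕ) (h1 : 1 ≤ k) (h2 : k ≤ N) :
    ∃ Q, (List.range' 1 N).flatMap g =
      (List.range' 1 (k - 1)).flatMap g ++ (g k ++ Q) := by
  refine ⟨(List.range' (k + 1) (N - k)).flatMap g, ?_⟩
  have h3 : List.range' 1 N = List.range' 1 (k - 1) ++ List.range' k (N - k + 1) := by
    have h : List.range' 1 (k - 1) ++ List.range' (1 + 1 * (k - 1)) (N - k + 1) 1 =
        List.range' 1 (k - 1 + (N - k + 1)) 1 := List.range'_append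
    rw [show 1 + 1 * (k - 1) = k by omega, show k - 1 + (N - k + 1) = N by omega] at h
    exact h.symm
  rw [h3, List.flatMap_append, List.range'_succ, List.flatMap_cons]

lemma invlim_coord {V : ℕ → Type*} {φ : ∀ n, V (n + 1) → V n} (z w : InvLim V φ) :
    ∀ k i, z.1 (i + k) = w.1 (i + k) → z.1 i = w.1 i := by
  intro k
  induction k with
  | zero => intro i h; exact h
  | succ k ih =>
    intro i h
    apply ih
    have hz := z.2 (i + k)
    have hw := w.2 (i + k)
    rw [← hz, ← hw]
    exact congrArg (φ (i + k)) h

theorem stmt5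
    (V : ℕ → Type) [∀ n, TopologicalSpace (V n)] [∀ n, DiscreteTopology (V n)]
    [∀ n, Fintype (V n)]
    (E : ∀ n, V n → V n → Prop) (φ : ∀ n, V (n + 1) → V n)
    (len : ℕ → ℕ → ℕ) (v0 : ∀ n, V n) (vtx : ∀ n, ℕ → ℕ → V n)
    (hV0 : ∀ u : V 0, u = v0 0)
    (hE0 : ∀ u v : V 0, E 0 u v ↔ u = v0 0 ∧ v = v0 0)
    (hends : ∀ n i, 1 ≤ i → i ≤ n → vtx n i 0 = v0 n ∧ vtx n i (len n i) = v0 n)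
    (hlen2 : ∀ n i, 1 ≤ i → i ≤ n → 2 ≤ len n i)
    (hrec : ∀ n i, 1 ≤ i → i ≤ n →
      len (n + 1) i = 2 + 2 * ∑ j ∈ Finset.Icc i n, len n j)
    (hne : ∀ n i j, 1 ≤ i → i ≤ n → 0 < j → j < len n i → vtx n i j ≠ v0 n)
    (hinj : ∀ n i j i' j', 1 ≤ i → i ≤ n → 1 ≤ i' → i' ≤ n →
      0 < j → j < len n i → 0 < j' → j' < len n i' →
      vtx n i j = vtx n i' j' → i = i' ∧ j = j')
    (hall : ∀ n, 1 ≤ n → ∀ u : V n,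
      u = v0 n ∨ ∃ i j, 1 ≤ i ∧ i ≤ n ∧ 0 < j ∧ j < len n i ∧ u = vtx n i j)
    (hE : ∀ n, 1 ≤ n → ∀ u v : V n, E n u v ↔
      (u = v0 n ∧ v = v0 n) ∨
      ∃ i j, 1 ≤ i ∧ i ≤ n ∧ j < len n i ∧ u = vtx n i j ∧ v = vtx n i (j + 1))
    (hphi0 : ∀ n, φ n (v0 (n + 1)) = v0 n)
    (hphitop : ∀ n j, j ≤ len (n + 1) (n + 1) → φ n (vtx (n + 1) (n + 1) j) = v0 n)
    (hphiwalk : ∀ n i, 1 ≤ i → i ≤ n →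
      List.map (φ n) (circList (vtx (n + 1)) i (len (n + 1) i)) =
        v0 n :: (((List.range' i (n + 1 - i)).flatMap fun k =>
          circList (vtx n) k (len n k) ++ circList (vtx n) k (len n k)) ++ [v0 n]))
    (hcov : ∀ n, IsCover (E (n + 1)) (E n) (φ n))
    (f : InvLim V φ ≃ₜ InvLim V φ)
    (hf : ∀ x y : InvLim V φ, ERel E φ x y ↔ f x = y)
    (m : MetricSpace (InvLim V φ))
    (hm : mtop m = (inferInstance : TopologicalSpace (InvLim V φ))) :
    ∃ x₀ : InvLim V φ, Dense (Set.range fun i : ℕ => (⇑f)^[i] x₀) := by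
  classical
  -- growth of `len n 1`
  have hlow : ∀ n, 1 ≤ n → n + 1 ≤ len n 1 := by
    intro n
    induction n with
    | zero => omega
    | succ m ih =>
      intro _
      rcases Nat.eq_zero_or_pos m with rfl | hm
      · simpa using hlen2 1 1 le_rfl le_rfl
      · have h1 : len m 1 ≤ ∑ j ∈ Finset.Icc 1 m, len m j :=
          Finset.single_le_sum (fun i _ => Nat.zero_le _)
            (Finset.mem_Icc.mpr ⟨le_rfl, hm⟩)
        have h2 := hrec m 1 le_rfl hm
        have h3 := ih hm
        omega
  -- the walk entry formula
  have hkey : ∀ n, 1 ≤ n → ∀ j, j < len (n + 1) 1 →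
      φ n (vtx (n + 1) 1 j) =
        (v0 n :: (((List.range' 1 n).flatMap fun k =>
          circList (vtx n) k (len n k) ++ circList (vtx n) k (len n k)) ++ [v0 n])).getD j (v0 n) := by
    intro n hn j hj
    have hw := hphiwalk n 1 le_rfl hn
    rw [show n + 1 - 1 = n from rfl] at hw
    have hjlen : j < (List.map (φ n) (circList (vtx (n + 1)) 1 (len (n + 1) 1))).length := by
      simpa [circList] using hj
    have h1 : φ n (vtx (n + 1) 1 j) =
        (List.map (φ n) (circList (vtx (n + 1)) 1 (len (n + 1) 1))).getD j (v0 n) := by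
      rw [List.getD_eq_getElem _ _ hjlen, List.getElem_map]
      simp [circList]
    rw [h1, hw]
  -- length bookkeeping
  have hBlen : ∀ n, 1 ≤ n →
      ((List.range' 1 n).flatMap fun k =>
        circList (vtx n) k (len n k) ++ circList (vtx n) k (len n k)).length + 2 = len (n + 1) 1 := by
    intro n hn
    have hw := hphiwalk n 1 le_rfl hn
    rw [show n + 1 - 1 = n from rfl] at hw
    have h2 := congrArg List.length hw
    simp [circList] at h2 ⊢
    omega
  -- image of the first copy of `c_{n,1}`
  have hfactA : ∀ n, 1 ≤ n → φ n (vtx (n + 1) 1 (n + 1)) = vtx n 1 n := by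
    intro n hn
    have hlen1 := hlow n hn
    have hjlt : n + 1 < len (n + 1) 1 := by
      have := hlow (n + 1) (by omega)
      omega
    rw [hkey n hn (n + 1) hjlt]
    obtain ⟨Q, hQ⟩ := flat_decomp
      (fun k => circList (vtx n) k (len n k) ++ circList (vtx n) k (len n k)) n 1 le_rfl hn
    rw [show (1 : ℕ) - 1 = 0 from rfl, List.range'_zero, List.flatMap_nil, List.nil_append] at hQ
    rw [hQ, List.getD_cons_succ]
    rw [List.getD_append _ _ _ n (by simp [circList]; omega),
        List.getD_append _ _ _ n (by simp [circList]; omega),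
        List.getD_append _ _ _ n (by simp [circList]; omega),
        List.getD_eq_getElem _ _ (by simp [circList]; omega)]
    simp [circList]
  -- every interior vertex of `G_n` is the image of a late vertex of `c_{n+1,1}`
  have hfactB : ∀ n, 1 ≤ n → ∀ k m, 1 ≤ k → k ≤ n → 0 < m → m < len n k →
      ∃ j, n + 1 ≤ j ∧ j < len (n + 1) 1 ∧ φ n (vtx (n + 1) 1 j) = vtx n k m := by
    intro n hn k m hk1 hkn hm1 hm2
    obtain ⟨Q, hQ⟩ := flat_decomp
      (fun k => circList (vtx n) k (len n k) ++ circList (vtx n) k (len n k)) n k hk1 hkn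
    have hB2 := hBlen n hn
    have hck : (circList (vtx n) k (len n k)).length = len n k := by simp [circList]
    set P := ((List.range' 1 (k - 1)).flatMap fun k =>
        circList (vtx n) k (len n k) ++ circList (vtx n) k (len n k)) with hP
    have hPl : (k = 1 ∧ P.length = 0) ∨ 2 * len n 1 ≤ P.length := by
      rcases Nat.lt_or_ge k 2 with h | h
      · left
        refine ⟨by omega, ?_⟩
        rw [hP, show k - 1 = 0 by omega, List.range'_zero, List.flatMap_nil]
        rfl
      · right
        obtain ⟨Q', hQ'⟩ := flat_decomp
          (fun k => circList (vtx n) k (len n k) ++ circList (vtx n) k (len n k))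
          (k - 1) 1 le_rfl (by omega)
        rw [show (1 : ℕ) - 1 = 0 from rfl, List.range'_zero, List.flatMap_nil,
          List.nil_append] at hQ'
        rw [hP, hQ']
        simp [circList]
        omega
    have hBL : ((List.range' 1 n).flatMap fun k =>
        circList (vtx n) k (len n k) ++ circList (vtx n) k (len n k)).length
        = P.length + (len n k + len n k + Q.length) := by
      rw [hQ]
      simp [circList]
      omega
    have hq1 : n ≤ P.length + len n k + m := by
      have hl1 := hlow n hn
      rcases hPl with ⟨hk1', h0⟩ | h
      · subst hk1'
        omega
      · omega
    refine ⟨P.length + len n k + m + 1, by omega, by omega, ?_⟩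
    rw [hkey n hn _ (by omega), List.getD_cons_succ, hQ]
    rw [List.getD_append _ _ _ _ (by simp [circList]; omega)]
    rw [List.getD_append_right _ _ _ _ (by omega)]
    rw [show P.length + len n k + m - P.length = len n k + m by omega]
    rw [List.getD_append _ _ _ _ (by simp [circList]; omega)]
    rw [List.getD_append_right _ _ _ _ (by simp [circList])]
    rw [hck, show len n k + m - len n k = m from by omega]
    rw [List.getD_eq_getElem _ _ (by simp [circList]; omega)]
    simp [circList]
  -- determinism along circuit interiors
  have hdet : ∀ n, 1 ≤ n → ∀ i j (v : V n), 1 ≤ i → i ≤ n → 0 < j → j < len n i →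
      E n (vtx n i j) v → v = vtx n i (j + 1) := by
    intro n hn i j v hi1 hin hj1 hj2 hEuv
    rw [hE n hn] at hEuv
    rcases hEuv with ⟨h1, _⟩ | ⟨i', j', hi'1, hi'n, hj', hu, hv⟩
    · exact absurd h1 (hne n i j hi1 hin hj1 hj2)
    · rcases Nat.eq_zero_or_pos j' with rfl | hj'pos
      · exfalso
        apply hne n i j hi1 hin hj1 hj2
        rw [hu]
        exact (hends n i' hi'1 hi'n).1
      · obtain ⟨rfl, rfl⟩ := hinj n i j i' j' hi1 hin hi'1 hi'n hj1 hj2 hj'pos hj' hu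
        exact hv
  -- the point x₀
  set x0seq : ∀ n, V n := fun n => Nat.rec (motive := V) (v0 0)
    (fun m _ => vtx (m + 1) 1 (m + 1)) n with hx0seq
  have hx0c : ∀ n, φ n (x0seq (n + 1)) = x0seq n := by
    intro n
    cases n with
    | zero => exact hV0 _
    | succ m => exact hfactA (m + 1) (by omega)
  set x₀ : InvLim V φ := ⟨x0seq, hx0c⟩ with hx₀
  -- orbit edges
  have horb : ∀ t n, E n (((⇑f)^[t] x₀).1 n) (((⇑f)^[t + 1] x₀).1 n) := by
    intro t n
    have h1 : f ((⇑f)^[t] x₀) = (⇑f)^[t + 1] x₀ := (Function.iterate_succ_apply' (⇑f) t x₀).symm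
    exact ((hf _ _).mpr h1) n
  -- the trajectory runs along `c_{n,1}`
  have htraj : ∀ t n, 1 ≤ n → n + t ≤ len n 1 → ((⇑f)^[t] x₀).1 n = vtx n 1 (n + t) := by
    intro t
    induction t with
    | zero =>
      intro n hn _
      cases n with
      | zero => omega
      | succ m => rfl
    | succ t ih =>
      intro n hn hle
      have hprev := ih n hn (by omega)
      have hedge := horb t n
      rw [hprev] at hedge
      exact hdet n hn 1 (n + t) _ le_rfl (by omega) (by omega) (by omega) hedge
  -- the orbit hits every vertex at every level
  have hhit : ∀ N (u : V N), ∃ t, ((⇑f)^[t] x₀).1 N = u := by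
    intro N u
    cases N with
    | zero => exact ⟨0, (hV0 _).trans (hV0 u).symm⟩
    | succ n =>
      rcases hall (n + 1) (by omega) u with rfl | ⟨k, m, hk1, hkn, hm1, hm2, rfl⟩
      · refine ⟨len (n + 2) 1 - (n + 2), ?_⟩
        have hl := hlow (n + 2) (by omega)
        have h1 := htraj (len (n + 2) 1 - (n + 2)) (n + 2) (by omega) (by omega)
        rw [show n + 2 + (len (n + 2) 1 - (n + 2)) = len (n + 2) 1 by omega] at h1
        have h2 : ((⇑f)^[len (n + 2) 1 - (n + 2)] x₀).1 (n + 1)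
            = φ (n + 1) (((⇑f)^[len (n + 2) 1 - (n + 2)] x₀).1 (n + 2)) :=
          (((⇑f)^[len (n + 2) 1 - (n + 2)] x₀).2 (n + 1)).symm
        rw [h2, h1, (hends (n + 2) 1 le_rfl (by omega)).2, hphi0]
      · obtain ⟨j, hj1, hj2, hj3⟩ := hfactB (n + 1) (by omega) k m hk1 hkn hm1 hm2
        have hj2' : j < len (n + 2) 1 := hj2
        have hj3' : φ (n + 1) (vtx (n + 2) 1 j) = vtx (n + 1) k m := hj3
        refine ⟨j - (n + 2), ?_⟩
        have h1 := htraj (j - (n + 2)) (n + 2) (by omega) (by omega)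
        rw [show n + 2 + (j - (n + 2)) = j by omega] at h1
        have h2 : ((⇑f)^[j - (n + 2)] x₀).1 (n + 1)
            = φ (n + 1) (((⇑f)^[j - (n + 2)] x₀).1 (n + 2)) :=
          (((⇑f)^[j - (n + 2)] x₀).2 (n + 1)).symm
        rw [h2, h1, hj3']
  -- density
  refine ⟨x₀, dense_iff_inter_open.mpr ?_⟩
  rintro U hU ⟨y, hy⟩
  have hUy : U ∈ 𝓝 y := hU.mem_nhds hy
  rw [nhds_induced] at hUy
  obtain ⟨W, hW, hWU⟩ := Filter.mem_comap.mp hUy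
  rw [nhds_pi] at hW
  obtain ⟨I, hIfin, t, ht, hsub⟩ := Filter.mem_pi.mp hW
  obtain ⟨N, hN⟩ := hIfin.bddAbove
  obtain ⟨s, hs⟩ := hhit N (y.1 N)
  refine ⟨(⇑f)^[s] x₀, hWU ?_, ⟨s, rfl⟩⟩
  apply hsub
  refine Set.mem_pi.mpr fun i hi => ?_
  have hle : i ≤ N := hN hi
  have hcoord : ((⇑f)^[s] x₀).1 i = y.1 i := by
    refine invlim_coord _ _ (N - i) i ?_
    have hNi : i + (N - i) = N := by omega
    rw [hNi]
    exact hs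
  rw [hcoord]
  exact mem_of_mem_nhds (ht i)
end

section
/- The Cantor system (X,f) of the construction is not locally equicontinuous: there exists a point x ∈ X that is not an equicontinuity point of the restriction of (X,f) to the orbit closure of x, i.e., there exist x ∈ X and ε > 0 such that for every δ > 0 there are a point y in the closure of {f^i(x) : i ∈ ℤ} and an n ≥ 0 with d(x,y) < δ and d(f^n(x), f^n(y)) ≥ ε. -/
open Filter Topology
open scoped ENNReal

/- ----------------- auxiliary lemmas ----------------- -/

lemma circList_length {Vn : Type*} (vtx : ℕ → ℕ → Vn) (i len : ℕ) :
    (circList vtx i len).length = len := by simp [circList]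

lemma circList_get {Vn : Type*} (vtx : ℕ → ℕ → Vn) {i len q : ℕ}
    (h : q < (circList vtx i len).length) :
    (circList vtx i len)[q] = vtx i q := by simp [circList]

lemma walk_get {A B : Type*} (g : A → B) (vt1 : ℕ → ℕ → A) (i L1 : ℕ) (rhs : List B)
    (heq : List.map g (circList vt1 i L1) = rhs) (q : ℕ) (hq : q < L1) :
    ∃ h : q < rhs.length, g (vt1 i q) = rhs[q] := by
  have h1 : q < (List.map g (circList vt1 i L1)).length := by
    simpa [circList] using hq
  have h2 : q < rhs.length := by rw [← heq]; exact h1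
  refine ⟨h2, ?_⟩
  have := List.getElem_of_eq heq h1
  rw [← this]
  simp [circList]

lemma entry_left {B : Type*} (v0 : B) (c rest : List B) (j : ℕ) (hj : j < c.length)
    {h : j + 1 < (v0 :: (((c ++ c) ++ rest) ++ [v0])).length} :
    (v0 :: (((c ++ c) ++ rest) ++ [v0]))[j+1] = getElem c j hj := by
  rw [List.getElem_cons_succ]
  rw [List.getElem_append_left (by simp; omega), List.getElem_append_left (by simp; omega),
    List.getElem_append_left hj]

lemma entry_mid {B : Type*} (v0 : B) (c rest : List B) (j : ℕ) (hj1 : c.length ≤ j)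
    (hj : j < c.length + c.length)
    {h : j + 1 < (v0 :: (((c ++ c) ++ rest) ++ [v0])).length} :
    (v0 :: (((c ++ c) ++ rest) ++ [v0]))[j+1] = getElem c (j - c.length) (by omega) := by
  rw [List.getElem_cons_succ]
  rw [List.getElem_append_left (by simp; omega), List.getElem_append_left (by simp; omega),
    List.getElem_append_right hj1]

lemma entry_third {B : Type*} (v0 : B) (c1 c2 rest : List B) (j : ℕ)
    (hj1 : c1.length + c1.length ≤ j) (hj : j - (c1.length + c1.length) < c2.length)
    {h : j + 1 < (v0 :: (((c1 ++ c1) ++ ((c2 ++ c2) ++ rest)) ++ [v0])).length} :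
    (v0 :: (((c1 ++ c1) ++ ((c2 ++ c2) ++ rest)) ++ [v0]))[j+1]
      = getElem c2 (j - (c1.length + c1.length)) hj := by
  rw [List.getElem_cons_succ]
  rw [List.getElem_append_left (by simp; omega), List.getElem_append_right (by simp; omega)]
  have : j - (c1 ++ c1).length = j - (c1.length + c1.length) := by simp
  simp only [this]
  rw [List.getElem_append_left (by simp; omega), List.getElem_append_left hj]

section W
variable {A B : Type*} (g : A → B) (v0n : B) (vtn : ℕ → ℕ → B) (vt1 : ℕ → ℕ → A)
  (lens : ℕ → ℕ) (i n L1 : ℕ)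

/-- first copy of circuit `i` in the walk -/
lemma Wfirst (hi : i ≤ n) (hi1 : 1 ≤ i)
    (heq : List.map g (circList vt1 i L1) =
      v0n :: (((List.range' i (n+1-i)).flatMap fun k =>
        circList vtn k (lens k) ++ circList vtn k (lens k)) ++ [v0n]))
    (q : ℕ) (h1 : 1 ≤ q) (h2 : q ≤ lens i) (hqL : q < L1) :
    g (vt1 i q) = vtn i (q - 1) := by
  rw [show n + 1 - i = (n - i) + 1 by omega, List.range'_succ, List.flatMap_cons] at heq
  obtain ⟨hlt, hval⟩ := walk_get g vt1 i L1 _ heq q hqL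
  obtain ⟨j, rfl⟩ : ∃ j, q = j + 1 := ⟨q - 1, by omega⟩
  rw [hval, entry_left _ _ _ j (by rw [circList_length]; omega), circList_get]
  simp

/-- second copy of circuit `i` in the walk -/
lemma Wsecond (hi : i ≤ n) (hi1 : 1 ≤ i)
    (heq : List.map g (circList vt1 i L1) =
      v0n :: (((List.range' i (n+1-i)).flatMap fun k =>
        circList vtn k (lens k) ++ circList vtn k (lens k)) ++ [v0n]))
    (q : ℕ) (h1 : 1 + lens i ≤ q) (h2 : q ≤ 2 * lens i) (hqL : q < L1) :
    g (vt1 i q) = vtn i (q - 1 - lens i) := by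
  rw [show n + 1 - i = (n - i) + 1 by omega, List.range'_succ, List.flatMap_cons] at heq
  obtain ⟨hlt, hval⟩ := walk_get g vt1 i L1 _ heq q hqL
  obtain ⟨j, rfl⟩ : ∃ j, q = j + 1 := ⟨q - 1, by omega⟩
  rw [hval, entry_mid _ _ _ j (by rw [circList_length]; omega)
    (by rw [circList_length]; omega), circList_get]
  rw [circList_length]
  first
  | rfl
  | (congr 1; omega)

/-- first copy of circuit 2 in the walk of circuit 1 (needs `2 ≤ n`) -/
lemma Wthird (hn : 2 ≤ n)
    (heq : List.map g (circList vt1 1 L1) =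
      v0n :: (((List.range' 1 (n+1-1)).flatMap fun k =>
        circList vtn k (lens k) ++ circList vtn k (lens k)) ++ [v0n]))
    (q : ℕ) (h1 : 1 + 2 * lens 1 ≤ q) (h2 : q - (1 + 2 * lens 1) < lens 2) (hqL : q < L1) :
    g (vt1 1 q) = vtn 2 (q - (1 + 2 * lens 1)) := by
  rw [show n + 1 - 1 = (n - 2) + 1 + 1 by omega, List.range'_succ, List.range'_succ,
    List.flatMap_cons, List.flatMap_cons] at heq
  simp only [show (1+1 : ℕ) = 2 from rfl] at heq
  obtain ⟨hlt, hval⟩ := walk_get g vt1 1 L1 _ heq q hqL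
  obtain ⟨j, rfl⟩ : ∃ j, q = j + 1 := ⟨q - 1, by omega⟩
  rw [hval]
  rw [entry_third _ _ _ _ j (by rw [circList_length]; omega)
    (by rw [circList_length, circList_length]; omega), circList_get]
  rw [circList_length]
  first
  | rfl
  | (congr 1; omega)

end W

theorem stmt6
    (V : ℕ → Type) [∀ n, TopologicalSpace (V n)] [∀ n, DiscreteTopology (V n)]
    [∀ n, Fintype (V n)]
    (E : ∀ n, V n → V n → Prop) (φ : ∀ n, V (n + 1) → V n)
    (len : ℕ → ℕ → ℕ) (v0 : ∀ n, V n) (vtx : ∀ n, ℕ → ℕ → V n)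
    (hV0 : ∀ u : V 0, u = v0 0)
    (hE0 : ∀ u v : V 0, E 0 u v ↔ u = v0 0 ∧ v = v0 0)
    (hends : ∀ n i, 1 ≤ i → i ≤ n → vtx n i 0 = v0 n ∧ vtx n i (len n i) = v0 n)
    (hlen2 : ∀ n i, 1 ≤ i → i ≤ n → 2 ≤ len n i)
    (hrec : ∀ n i, 1 ≤ i → i ≤ n →
      len (n + 1) i = 2 + 2 * ∑ j ∈ Finset.Icc i n, len n j)
    (hne : ∀ n i j, 1 ≤ i → i ≤ n → 0 < j → j < len n i → vtx n i j ≠ v0 n)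
    (hinj : ∀ n i j i' j', 1 ≤ i → i ≤ n → 1 ≤ i' → i' ≤ n →
      0 < j → j < len n i → 0 < j' → j' < len n i' →
      vtx n i j = vtx n i' j' → i = i' ∧ j = j')
    (hall : ∀ n, 1 ≤ n → ∀ u : V n,
      u = v0 n ∨ ∃ i j, 1 ≤ i ∧ i ≤ n ∧ 0 < j ∧ j < len n i ∧ u = vtx n i j)
    (hE : ∀ n, 1 ≤ n → ∀ u v : V n, E n u v ↔
      (u = v0 n ∧ v = v0 n) ∨
      ∃ i j, 1 ≤ i ∧ i ≤ n ∧ j < len n i ∧ u = vtx n i j ∧ v = vtx n i (j + 1))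
    (hphi0 : ∀ n, φ n (v0 (n + 1)) = v0 n)
    (hphitop : ∀ n j, j ≤ len (n + 1) (n + 1) → φ n (vtx (n + 1) (n + 1) j) = v0 n)
    (hphiwalk : ∀ n i, 1 ≤ i → i ≤ n →
      List.map (φ n) (circList (vtx (n + 1)) i (len (n + 1) i)) =
        v0 n :: (((List.range' i (n + 1 - i)).flatMap fun k =>
          circList (vtx n) k (len n k) ++ circList (vtx n) k (len n k)) ++ [v0 n]))
    (hcov : ∀ n, IsCover (E (n + 1)) (E n) (φ n))
    (f : InvLim V φ ≃ₜ InvLim V φ)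
    (hf : ∀ x y : InvLim V φ, ERel E φ x y ↔ f x = y)
    (m : MetricSpace (InvLim V φ))
    (hm : mtop m = (inferInstance : TopologicalSpace (InvLim V φ))) :
    ∃ (x : InvLim V φ) (ε : ℝ), 0 < ε ∧ ∀ δ : ℝ, 0 < δ →
      ∃ y ∈ closure (Set.range fun i : ℤ =>
        ((f.toEquiv : Equiv.Perm (InvLim V φ)) ^ i) x),
        ∃ n : ℕ, mdist m x y < δ ∧ ε ≤ mdist m ((⇑f)^[n] x) ((⇑f)^[n] y) := by
  classical
  -- length lower bounds
  have hL : ∀ s, 1 ≤ s → s + 1 ≤ len s 1 := by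
    intro s
    induction s with
    | zero => intro h; omega
    | succ s ih =>
      intro _
      by_cases h0 : s = 0
      · subst h0
        have h1 := hlen2 1 1 le_rfl le_rfl
        have h2 : len (0+1) 1 = len 1 1 := rfl
        omega
      · have hs1 : 1 ≤ s := Nat.one_le_iff_ne_zero.mpr h0
        have h1 := hrec s 1 le_rfl hs1
        have h2 : len s 1 ≤ ∑ j ∈ Finset.Icc 1 s, len s j :=
          Finset.single_le_sum (fun j _ => Nat.zero_le _) (Finset.mem_Icc.mpr ⟨le_rfl, hs1⟩)
        have h3 := ih hs1
        omega
  have hK : ∀ s, 2 ≤ s → s ≤ len s 2 := by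
    intro s
    induction s with
    | zero => intro h; omega
    | succ s ih =>
      intro hs
      by_cases h0 : s = 1
      · subst h0
        have h1 := hlen2 2 2 (by omega) le_rfl
        have h2 : len (1+1) 2 = len 2 2 := rfl
        omega
      · have hs2 : 2 ≤ s := by omega
        have h1 := hrec s 2 (by omega) hs2
        have h2 : len s 2 ≤ ∑ j ∈ Finset.Icc 2 s, len s j :=
          Finset.single_le_sum (fun j _ => Nat.zero_le _) (Finset.mem_Icc.mpr ⟨le_rfl, hs2⟩)
        have h3 := ih hs2
        omega
  have hsum12 : ∀ s, 2 ≤ s → len s 1 + len s 2 ≤ ∑ j ∈ Finset.Icc 1 s, len s j := by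
    intro s hs
    have hsub : ({1, 2} : Finset ℕ) ⊆ Finset.Icc 1 s := by
      intro j hj
      simp only [Finset.mem_insert, Finset.mem_singleton] at hj
      rcases hj with rfl | rfl <;> simp [Finset.mem_Icc] <;> omega
    calc len s 1 + len s 2 = ∑ j ∈ ({1, 2} : Finset ℕ), len s j :=
          (Finset.sum_pair (by norm_num)).symm
      _ ≤ _ := Finset.sum_le_sum_of_subset hsub
  -- the three walk-value lemmas, specialized
  have W1' : ∀ n i q, 1 ≤ i → i ≤ n → 1 ≤ q → q ≤ len n i →
      φ n (vtx (n+1) i q) = vtx n i (q - 1) := by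
    intro n i q hi1 hin h1 h2
    have hw := hphiwalk n i hi1 hin
    refine Wfirst (φ n) (v0 n) (vtx n) (vtx (n+1)) (len n) i n (len (n+1) i) hin hi1 hw q h1 h2 ?_
    have hr := hrec n i hi1 hin
    have hs : len n i ≤ ∑ j ∈ Finset.Icc i n, len n j :=
      Finset.single_le_sum (fun j _ => Nat.zero_le _) (Finset.mem_Icc.mpr ⟨le_rfl, hin⟩)
    omega
  have W2' : ∀ n q, 1 ≤ n → 1 + len n 1 ≤ q → q ≤ 2 * len n 1 →
      φ n (vtx (n+1) 1 q) = vtx n 1 (q - 1 - len n 1) := by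
    intro n q hn h1 h2
    have hw := hphiwalk n 1 le_rfl hn
    refine Wsecond (φ n) (v0 n) (vtx n) (vtx (n+1)) (len n) 1 n (len (n+1) 1) hn le_rfl hw q h1 h2 ?_
    have hr := hrec n 1 le_rfl hn
    have hs : len n 1 ≤ ∑ j ∈ Finset.Icc 1 n, len n j :=
      Finset.single_le_sum (fun j _ => Nat.zero_le _) (Finset.mem_Icc.mpr ⟨le_rfl, hn⟩)
    omega
  have W3' : ∀ n q, 2 ≤ n → 1 + 2 * len n 1 ≤ q → q - (1 + 2 * len n 1) < len n 2 →
      φ n (vtx (n+1) 1 q) = vtx n 2 (q - (1 + 2 * len n 1)) := by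
    intro n q hn h1 h2
    have hw := hphiwalk n 1 le_rfl (by omega)
    refine Wthird (φ n) (v0 n) (vtx n) (vtx (n+1)) (len n) n (len (n+1) 1) hn hw q h1 h2 ?_
    have hr := hrec n 1 le_rfl (by omega)
    have hs := hsum12 n hn
    omega
  -- unique successor at interior vertices
  have hsucc : ∀ (z : InvLim V φ) (n i j : ℕ), 1 ≤ i → i ≤ n → 0 < j → j < len n i →
      z.1 n = vtx n i j → (f z).1 n = vtx n i (j + 1) := by
    intro z n i j hi1 hin hj0 hjlen hz
    have hEz : E n (z.1 n) ((f z).1 n) := (hf z (f z)).mpr rfl n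
    have h1n : 1 ≤ n := le_trans hi1 hin
    rcases (hE n h1n _ _).mp hEz with ⟨h1, _⟩ | ⟨i', j', hi'1, hi'n, hj'len, hu, hv⟩
    · exact absurd (hz ▸ h1) (hne n i j hi1 hin hj0 hjlen)
    · have hj'0 : 0 < j' := by
        rcases Nat.eq_zero_or_pos j' with h0 | h
        · exfalso
          apply hne n i j hi1 hin hj0 hjlen
          rw [← hz, hu, h0]
          exact (hends n i' hi'1 hi'n).1
        · exact h
      obtain ⟨hii, hjj⟩ := hinj n i j i' j' hi1 hin hi'1 hi'n hj0 hjlen hj'0 hj'len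
        (by rw [← hz, hu])
      rw [hv, ← hii, ← hjj]
  -- iteration along a circuit
  have hiter : ∀ (t : ℕ) (z : InvLim V φ) (n i p : ℕ), 1 ≤ i → i ≤ n → 0 < p →
      p + t ≤ len n i → z.1 n = vtx n i p → (f^[t] z).1 n = vtx n i (p + t) := by
    intro t
    induction t with
    | zero => intro z n i p _ _ _ _ hz; simpa using hz
    | succ t ih =>
      intro z n i p hi1 hin hp0 hpt hz
      have h1 : (f^[t] z).1 n = vtx n i (p + t) := ih z n i p hi1 hin hp0 (by omega) hz
      have h2 := hsucc (f^[t] z) n i (p+t) hi1 hin (by omega) (by omega) h1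
      rw [Function.iterate_succ_apply']
      exact h2
  -- downward agreement of coordinates
  have hdown : ∀ (z w : InvLim V φ) (k r : ℕ), z.1 (k + r) = w.1 (k + r) → z.1 k = w.1 k := by
    intro z w k r
    induction r with
    | zero => exact id
    | succ r ih =>
      intro h
      apply ih
      have hz := z.2 (k + r)
      have hw := w.2 (k + r)
      have h' : z.1 (k + r + 1) = w.1 (k + r + 1) := h
      rw [← hz, ← hw, h']
  -- descending a circuit-coordinate to level 2
  have hdesc : ∀ (i : ℕ), 1 ≤ i → (∀ s, 2 ≤ s → i ≤ s ∧ s ≤ len s i) →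
      ∀ (z : InvLim V φ) (r : ℕ), z.1 (2 + r) = vtx (2 + r) i (1 + r) → z.1 2 = vtx 2 i 1 := by
    intro i hi1 hbound z r
    induction r with
    | zero => exact id
    | succ r ih =>
      intro h
      apply ih
      have hz := z.2 (2 + r)
      have h' : z.1 ((2 + r) + 1) = vtx ((2 + r) + 1) i (2 + r) := by
        rw [show (2 + r) + 1 = 2 + (r + 1) by omega, show 2 + r = 1 + (r + 1) by omega]
        exact h
      have hb := hbound (2 + r) (by omega)
      have hw := W1' (2 + r) i (2 + r) hi1 hb.1 (by omega) hb.2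
      rw [← hz, h', hw]
      first
      | rfl
      | (congr 1; omega)
  -- the point x
  obtain ⟨x, hx, hx0⟩ : ∃ x : InvLim V φ,
      (∀ k, x.1 (k+1) = vtx (k+1) 1 (k+1)) ∧ x.1 0 = v0 0 := by
    refine ⟨⟨fun n => Nat.casesOn n (v0 0) (fun k => vtx (k+1) 1 (k+1)), ?_⟩, fun k => rfl, rfl⟩
    intro n
    cases n with
    | zero => exact hV0 _
    | succ n =>
      have hw := W1' (n+1) 1 (n+2) le_rfl (by omega) (by omega) (hL (n+1) (by omega))
      exact hw
  -- pair of points differing at coordinate 2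
  have hlen21 : 6 ≤ len 2 1 := by
    have h1 := hrec 1 1 le_rfl le_rfl
    have h2 : ∑ j ∈ Finset.Icc 1 1, len 1 j = len 1 1 := by
      rw [Finset.Icc_self, Finset.sum_singleton]
    have h3 := hlen2 1 1 le_rfl le_rfl
    have h4 : len (1+1) 1 = len 2 1 := rfl
    omega
  have hx2 : x.1 2 = vtx 2 1 2 := hx 1
  have hfx2 : (f x).1 2 = vtx 2 1 3 := hsucc x 2 1 2 le_rfl (by omega) (by omega) (by omega) hx2
  have hx_ne : x.1 2 ≠ (f x).1 2 := by
    rw [hx2, hfx2]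
    intro hEq
    obtain ⟨_, h23⟩ := hinj 2 1 2 1 3 le_rfl (by omega) le_rfl (by omega) (by omega)
      (by omega) (by omega) (by omega) hEq
    omega
  -- compactness
  haveI : CompactSpace (InvLim V φ) := by
    have hclosed : IsClosed {p : (∀ n, V n) | ∀ n, φ n (p (n+1)) = p n} := by
      have : {p : (∀ n, V n) | ∀ n, φ n (p (n+1)) = p n} = ⋂ n, {p | φ n (p (n+1)) = p n} := by
        ext p; simp [Set.mem_iInter]
      rw [this]
      exact isClosed_iInter fun n => isClosed_eq
        (continuous_of_discreteTopology.comp (continuous_apply (n+1))) (continuous_apply n)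
    exact isCompact_iff_compactSpace.mp hclosed.isCompact
  -- the separating distance ε
  have hcont2 : Continuous (fun z : InvLim V φ => z.1 2) :=
    (continuous_apply 2).comp continuous_subtype_val
  have hDclosed : IsClosed {p : InvLim V φ × InvLim V φ | p.1.1 2 ≠ p.2.1 2} := by
    have hD : {p : InvLim V φ × InvLim V φ | p.1.1 2 ≠ p.2.1 2} =
        (fun p : InvLim V φ × InvLim V φ => (p.1.1 2, p.2.1 2)) ⁻¹'
          {q : V 2 × V 2 | q.1 ≠ q.2} := rfl
    rw [hD]
    exact IsClosed.preimage
      ((hcont2.comp continuous_fst).prodMk (hcont2.comp continuous_snd))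
      (isClosed_discrete _)
  have hdistc : Continuous (fun p : InvLim V φ × InvLim V φ => mdist m p.1 p.2) := by
    have h0 : @Continuous _ _ (@instTopologicalSpaceProd _ _ (mtop m) (mtop m)) _
        (fun p : InvLim V φ × InvLim V φ => mdist m p.1 p.2) :=
      @continuous_dist _ m.toPseudoMetricSpace
    rw [hm] at h0
    exact h0
  have hDne : Set.Nonempty {p : InvLim V φ × InvLim V φ | p.1.1 2 ≠ p.2.1 2} :=
    ⟨(x, f x), hx_ne⟩
  obtain ⟨p0, hp0D, hp0min⟩ :=
    (hDclosed.isCompact).exists_isMinOn hDne hdistc.continuousOn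
  have hε : 0 < mdist m p0.1 p0.2 := by
    have hne' : p0.1 ≠ p0.2 := by
      intro h
      exact hp0D (by rw [h])
    exact (@dist_pos _ m _ _).mpr hne'
  have hsep : ∀ u w : InvLim V φ, u.1 2 ≠ w.1 2 → mdist m p0.1 p0.2 ≤ mdist m u w :=
    fun u w h => (isMinOn_iff.mp hp0min) (u, w) h
  refine ⟨x, mdist m p0.1 p0.2, hε, ?_⟩
  intro δ hδ
  -- choose N from δ
  obtain ⟨N, hN2, hclose⟩ : ∃ (N : ℕ), 2 ≤ N ∧
      ∀ z : InvLim V φ, (∀ k, k ≤ N + 1 → z.1 k = x.1 k) → mdist m x z < δ := by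
    have h0 : @IsOpen _ (mtop m) {z : InvLim V φ | mdist m x z < δ} := by
      have hb : {z : InvLim V φ | mdist m x z < δ} = @Metric.ball _ m.toPseudoMetricSpace x δ := by
        ext z
        show mdist m x z < δ ↔ _
        rw [@Metric.mem_ball _ m.toPseudoMetricSpace, @dist_comm _ m.toPseudoMetricSpace]
        rfl
      rw [hb]
      exact @Metric.isOpen_ball _ m.toPseudoMetricSpace x δ
    rw [hm] at h0
    obtain ⟨O, hO, hball_eq⟩ := isOpen_induced_iff.mp h0
    have hxO : x.1 ∈ O := by
      have hmem : x ∈ {z : InvLim V φ | mdist m x z < δ} := by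
        show mdist m x x < δ
        have hd : mdist m x x = 0 := @dist_self _ m.toPseudoMetricSpace x
        rw [hd]; exact hδ
      rw [← hball_eq] at hmem
      exact hmem
    obtain ⟨I, u, hIu, hpi⟩ := (isOpen_pi_iff.mp hO) x.1 hxO
    refine ⟨max (I.sup id) 2, le_max_right _ _, fun z hz => ?_⟩
    have hzO : z.1 ∈ O := by
      apply hpi
      intro a haI
      have haN : a ≤ max (I.sup id) 2 := le_trans (Finset.le_sup (f := id) haI) (le_max_left _ _)
      rw [hz a (by omega)]
      exact (hIu a haI).2
    have hmem : z ∈ Subtype.val ⁻¹' O := hzO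
    rw [hball_eq] at hmem
    exact hmem
  -- abbreviations
  have hLN : N + 2 ≤ len (N+1) 1 := hL (N+1) (by omega)
  have hKN : N + 1 ≤ len (N+1) 2 := hK (N+1) (by omega)
  have hL' : len (N+2) 1 = 2 + 2 * ∑ j ∈ Finset.Icc 1 (N+1), len (N+1) j :=
    hrec (N+1) 1 le_rfl (by omega)
  have hsumN : len (N+1) 1 + len (N+1) 2 ≤ ∑ j ∈ Finset.Icc 1 (N+1), len (N+1) j :=
    hsum12 (N+1) (by omega)
  have hL'b : 2 + 2 * len (N+1) 1 + 2 * len (N+1) 2 ≤ len (N+2) 1 := by omega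
  have hxN2 : x.1 (N+2) = vtx (N+2) 1 (N+2) := hx (N+1)
  have hxN1 : x.1 (N+1) = vtx (N+1) 1 (N+1) := hx N
  -- the point y = f^[L] x with L = len (N+1) 1
  have step1 : (f^[len (N+1) 1] x).1 (N+2) = vtx (N+2) 1 (N+2+len (N+1) 1) :=
    hiter (len (N+1) 1) x (N+2) 1 (N+2) le_rfl (by omega) (by omega) (by omega) hxN2
  have step2 : (f^[len (N+1) 1] x).1 (N+1) = vtx (N+1) 1 (N+1) := by
    have hc := (f^[len (N+1) 1] x).2 (N+1)
    rw [step1] at hc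
    have hw2 := W2' (N+1) (N+2+len (N+1) 1) (by omega) (by omega) (by omega)
    rw [← hc, hw2]
    congr 1
    omega
  have hyagree : ∀ k, k ≤ N + 1 → (f^[len (N+1) 1] x).1 k = x.1 k := by
    intro k hk
    obtain ⟨r, hr⟩ : ∃ r, N + 1 = k + r := ⟨N + 1 - k, by omega⟩
    apply hdown (f^[len (N+1) 1] x) x k r
    rw [← hr, step2, hxN1]
  -- the separation time T = len (N+1) 1 - 1
  have step3 : (f^[len (N+1) 1 - 1] x).1 (N+2) = vtx (N+2) 1 (N+2+(len (N+1) 1 - 1)) :=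
    hiter (len (N+1) 1 - 1) x (N+2) 1 (N+2) le_rfl (by omega) (by omega) (by omega) hxN2
  have step4 : (f^[len (N+1) 1 - 1] (f^[len (N+1) 1] x)).1 (N+2) =
      vtx (N+2) 1 (N+2+((len (N+1) 1 - 1) + len (N+1) 1)) := by
    rw [← Function.iterate_add_apply]
    exact hiter ((len (N+1) 1 - 1) + len (N+1) 1) x (N+2) 1 (N+2) le_rfl (by omega) (by omega)
      (by omega) hxN2
  have step5 : (f^[len (N+1) 1 - 1] x).1 (N+1) = vtx (N+1) 1 N := by
    have hc := (f^[len (N+1) 1 - 1] x).2 (N+1)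
    rw [step3] at hc
    have hw2 := W2' (N+1) (N+2+(len (N+1) 1 - 1)) (by omega) (by omega) (by omega)
    rw [← hc, hw2]
    congr 1
    omega
  have step6 : (f^[len (N+1) 1 - 1] (f^[len (N+1) 1] x)).1 (N+1) = vtx (N+1) 2 N := by
    have hc := (f^[len (N+1) 1 - 1] (f^[len (N+1) 1] x)).2 (N+1)
    rw [step4] at hc
    have hw3 := W3' (N+1) (N+2+((len (N+1) 1 - 1) + len (N+1) 1)) (by omega) (by omega) (by omega)
    rw [← hc, hw3]
    congr 1
    omega
  have step7 : (f^[len (N+1) 1 - 1] x).1 2 = vtx 2 1 1 := by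
    refine hdesc 1 le_rfl (fun s hs => ⟨by omega, by have := hL s (by omega); omega⟩)
      (f^[len (N+1) 1 - 1] x) (N - 1) ?_
    rw [show 2 + (N - 1) = N + 1 by omega, show 1 + (N - 1) = N by omega]
    exact step5
  have step8 : (f^[len (N+1) 1 - 1] (f^[len (N+1) 1] x)).1 2 = vtx 2 2 1 := by
    refine hdesc 2 (by omega) (fun s hs => ⟨hs, hK s hs⟩)
      (f^[len (N+1) 1 - 1] (f^[len (N+1) 1] x)) (N - 1) ?_
    rw [show 2 + (N - 1) = N + 1 by omega, show 1 + (N - 1) = N by omega]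
    exact step6
  have step9 : (f^[len (N+1) 1 - 1] x).1 2 ≠ (f^[len (N+1) 1 - 1] (f^[len (N+1) 1] x)).1 2 := by
    rw [step7, step8]
    intro hEq
    obtain ⟨h12, _⟩ := hinj 2 1 1 2 1 le_rfl (by omega) (by omega) le_rfl (by omega)
      (by omega) (by omega) (by have := hK 2 le_rfl; omega) hEq
    omega
  -- assemble
  refine ⟨f^[len (N+1) 1] x, ?_, len (N+1) 1 - 1, ?_, ?_⟩
  · apply subset_closure
    refine ⟨(len (N+1) 1 : ℤ), ?_⟩
    show ((f.toEquiv : Equiv.Perm (InvLim V φ)) ^ ((len (N+1) 1 : ℕ) : ℤ)) x = f^[len (N+1) 1] x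
    rw [zpow_natCast, ← Equiv.Perm.iterate_eq_pow]
    rfl
  · exact hclose (f^[len (N+1) 1] x) hyagree
  · exact hsep _ _ step9
end

section
/- In the Cantor system (X,f) of the construction, the point p = (v_{0,0}, v_{1,0}, v_{2,0}, …) is the only fixed point of f, and moreover p is the only periodic point of f (i.e., if f^k(x) = x for some k ≥ 1 then x = p). -/
open Filter Topology
open scoped ENNReal

/-!
A periodic point of `f` gives, at every level `N`, a periodic closed walk in `G_N` whose period
`k` does not depend on `N`. Inside a circuit a walk can neither turn back nor leave, so a periodic
walk through an interior vertex of `c_{N,i}` goes round the whole circuit and `k ≥ l(N,i)`. If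
`x ≠ p`, say `x_{n₀} ≠ v_{n₀,0}`, then `x_N` is an interior vertex of some `c_{N,i}` with
`i ≤ n₀` for every `N > n₀`, because `φ` sends `c_{N+1,N+1}` to the base vertex and `c_{N+1,i}`
into the circuits `c_{N,j}` with `j ≥ i`. Since `l(N,i) ≥ 2 + 4(N - i)` is unbounded in `N`
for fixed `i`, this contradicts `k ≥ l(N,i)`.
-/

/-- The graph `(V, E)` is the loop at `v0` together with the circuits
`vtx i 0 = v0, vtx i 1, …, vtx i (len i) = v0` for `1 ≤ i ≤ n`, meeting only in `v0`. -/
structure IsBouquet {V : Type*} (E : V → V → Prop) (v0 : V) (vtx : ℕ → ℕ → V) (len : ℕ → ℕ)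
    (n : ℕ) : Prop where
  vtx_zero : ∀ i, 1 ≤ i → i ≤ n → vtx i 0 = v0
  vtx_len : ∀ i, 1 ≤ i → i ≤ n → vtx i (len i) = v0
  vtx_ne : ∀ i j, 1 ≤ i → i ≤ n → 0 < j → j < len i → vtx i j ≠ v0
  vtx_inj : ∀ i j i' j', 1 ≤ i → i ≤ n → 1 ≤ i' → i' ≤ n →
    0 < j → j < len i → 0 < j' → j' < len i' → vtx i j = vtx i' j' → i = i' ∧ j = j'
  eq_or_exists : ∀ u, u = v0 ∨ ∃ i j, 1 ≤ i ∧ i ≤ n ∧ 0 < j ∧ j < len i ∧ u = vtx i j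
  adj_iff : ∀ u v, E u v ↔ (u = v0 ∧ v = v0) ∨
    ∃ i j, 1 ≤ i ∧ i ≤ n ∧ j < len i ∧ u = vtx i j ∧ v = vtx i (j + 1)

namespace IsBouquet

variable {V : Type*} {E : V → V → Prop} {v0 : V} {vtx : ℕ → ℕ → V} {len : ℕ → ℕ} {n i : ℕ}

theorem eq_succ_of_adj (hB : IsBouquet E v0 vtx len n) (hi1 : 1 ≤ i) (hin : i ≤ n) {j : ℕ}
    (hj0 : 0 < j) (hjl : j < len i) {v : V} (h : E (vtx i j) v) : v = vtx i (j + 1) := by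
  have hne := hB.vtx_ne i j hi1 hin hj0 hjl
  rcases (hB.adj_iff _ _).1 h with ⟨hu, _⟩ | ⟨i', j', hi'1, hi'n, hj'l, hu, hv⟩
  · exact absurd hu hne
  rcases Nat.eq_zero_or_pos j' with rfl | hj'0
  · exact absurd (hu.trans (hB.vtx_zero i' hi'1 hi'n)) hne
  obtain ⟨rfl, rfl⟩ := hB.vtx_inj i j i' j' hi1 hin hi'1 hi'n hj0 hjl hj'0 hj'l hu
  exact hv

theorem eq_of_adj_succ (hB : IsBouquet E v0 vtx len n) (hi1 : 1 ≤ i) (hin : i ≤ n) {j : ℕ}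
    (hjl : j + 1 < len i) {u : V} (h : E u (vtx i (j + 1))) : u = vtx i j := by
  have hne := hB.vtx_ne i (j + 1) hi1 hin j.succ_pos hjl
  rcases (hB.adj_iff _ _).1 h with ⟨_, hv⟩ | ⟨i', j', hi'1, hi'n, hj'l, hu, hv⟩
  · exact absurd hv hne
  rcases (Nat.succ_le_of_lt hj'l).eq_or_lt with hlen | hlt
  · rw [show j' + 1 = len i' from hlen, hB.vtx_len i' hi'1 hi'n] at hv
    exact absurd hv hne
  obtain ⟨rfl, hjj⟩ :=
    hB.vtx_inj i (j + 1) i' (j' + 1) hi1 hin hi'1 hi'n j.succ_pos hjl j'.succ_pos hlt hv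
  rwa [Nat.succ_inj.1 hjj]

section Walk

variable {u : ℕ → V}

theorem walk_eq_add (hB : IsBouquet E v0 vtx len n) (hi1 : 1 ≤ i) (hin : i ≤ n)
    (hu : ∀ m, E (u m) (u (m + 1))) {m j : ℕ} (hj0 : 0 < j) (hm : u m = vtx i j) :
    ∀ d, j + d ≤ len i → u (m + d) = vtx i (j + d) := by
  intro d
  induction d with
  | zero => exact fun _ => hm
  | succ d ih =>
    intro hd
    have hstep := hu (m + d)
    rw [ih (by omega)] at hstep
    exact hB.eq_succ_of_adj (j := j + d) hi1 hin (by omega) (by omega) hstep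

theorem walk_eq_of_eq_add (hB : IsBouquet E v0 vtx len n) (hi1 : 1 ≤ i) (hin : i ≤ n)
    (hu : ∀ m, E (u m) (u (m + 1))) {m j : ℕ} :
    ∀ d, j + d < len i → u (m + d) = vtx i (j + d) → u m = vtx i j := by
  intro d
  induction d with
  | zero => exact fun _ h => h
  | succ d ih =>
    intro hd h
    have hstep := hu (m + d)
    rw [← add_assoc, ← add_assoc] at h
    rw [h] at hstep
    exact ih (by omega) (hB.eq_of_adj_succ hi1 hin (by omega) hstep)

theorem len_le_period (hB : IsBouquet E v0 vtx len n) (hi1 : 1 ≤ i) (hin : i ≤ n)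
    (hu : ∀ m, E (u m) (u (m + 1))) {k : ℕ} (hk : 0 < k) (hper : Function.Periodic u k)
    {m j : ℕ} (hj0 : 0 < j) (hjl : j < len i) (hm : u m = vtx i j) : len i ≤ k := by
  obtain ⟨j, rfl⟩ : ∃ j', j = j' + 1 := ⟨j - 1, by omega⟩
  obtain ⟨k, rfl⟩ : ∃ k', k = k' + 1 := ⟨k - 1, by omega⟩
  -- walking back `j` steps from time `m + j * (k + 1)` reaches `vtx i 1`
  have ht : u (m + j * k) = vtx i 1 := by
    refine hB.walk_eq_of_eq_add hi1 hin hu j (by omega) ?_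
    calc u (m + j * k + j) = u (m + j * (k + 1)) := by rw [mul_add_one, add_assoc]
      _ = u m := by simpa using hper.nat_mul j m
      _ = vtx i (1 + j) := by rw [hm, add_comm]
  by_contra! hlt
  have hfwd := hB.walk_eq_add hi1 hin hu one_pos ht (k + 1) (by omega)
  rw [hper, ht] at hfwd
  rcases (show 1 + (k + 1) ≤ len i by omega).eq_or_lt with hlen | hlen
  · rw [hlen, hB.vtx_len i hi1 hin] at hfwd
    exact hB.vtx_ne i 1 hi1 hin one_pos (by omega) hfwd
  · have := (hB.vtx_inj i 1 i _ hi1 hin hi1 hin one_pos (by omega) (by omega) hlen hfwd).2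
    omega

end Walk

end IsBouquet

section Cover

variable {V : ℕ → Type*} {E : ∀ n, V n → V n → Prop} {φ : ∀ n, V (n + 1) → V n}
  {len : ℕ → ℕ → ℕ} {v0 : ∀ n, V n} {vtx : ∀ n, ℕ → ℕ → V n} {n i : ℕ}

theorem map_vtx_eq_or_interior (hB : IsBouquet (E n) (v0 n) (vtx n) (len n) n)
    (hi1 : 1 ≤ i) (hin : i ≤ n)
    (hwalk : List.map (φ n) (circList (vtx (n + 1)) i (len (n + 1) i)) =
      v0 n :: (((List.range' i (n + 1 - i)).flatMap fun k =>
        circList (vtx n) k (len n k) ++ circList (vtx n) k (len n k)) ++ [v0 n]))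
    {s : ℕ} (hs : s < len (n + 1) i) :
    φ n (vtx (n + 1) i s) = v0 n ∨
      ∃ j t, i ≤ j ∧ j ≤ n ∧ 0 < t ∧ t < len n j ∧ φ n (vtx (n + 1) i s) = vtx n j t := by
  have hmem : φ n (vtx (n + 1) i s) ∈
      List.map (φ n) (circList (vtx (n + 1)) i (len (n + 1) i)) :=
    List.mem_map_of_mem (List.mem_ofFn.2 ⟨⟨s, hs⟩, rfl⟩)
  rw [hwalk] at hmem
  simp only [List.mem_cons, List.mem_append, List.mem_flatMap, List.mem_range'_1,
    circList, List.mem_ofFn, or_self, List.not_mem_nil, or_false] at hmem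
  obtain h | ⟨j, ⟨hij, hjn⟩, t, ht⟩ | h := hmem
  · exact Or.inl h
  · rcases Nat.eq_zero_or_pos (t : ℕ) with h0 | hpos
    · left
      rw [← ht, h0, hB.vtx_zero j (by omega) (by omega)]
    · exact Or.inr ⟨j, t, hij, by omega, hpos, t.2, ht.symm⟩
  · exact Or.inl h

theorem exists_interior_of_map_ne
    (hB : IsBouquet (E (n + 1)) (v0 (n + 1)) (vtx (n + 1)) (len (n + 1)) (n + 1))
    (hphi0 : φ n (v0 (n + 1)) = v0 n)
    (hphitop : ∀ j, j ≤ len (n + 1) (n + 1) → φ n (vtx (n + 1) (n + 1) j) = v0 n)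
    {y : V (n + 1)} (hy : φ n y ≠ v0 n) :
    ∃ i j, 1 ≤ i ∧ i ≤ n ∧ 0 < j ∧ j < len (n + 1) i ∧ y = vtx (n + 1) i j := by
  obtain rfl | ⟨i, j, hi1, hin, hj0, hjl, rfl⟩ := hB.eq_or_exists y
  · exact absurd hphi0 hy
  rcases hin.lt_or_eq with hin | rfl
  · exact ⟨i, j, hi1, by omega, hj0, hjl, rfl⟩
  · exact absurd (hphitop j hjl.le) hy

theorem le_of_map_vtx_eq_vtx (hB : IsBouquet (E n) (v0 n) (vtx n) (len n) n)
    (hi1 : 1 ≤ i) (hin : i ≤ n)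
    (hwalk : List.map (φ n) (circList (vtx (n + 1)) i (len (n + 1) i)) =
      v0 n :: (((List.range' i (n + 1 - i)).flatMap fun k =>
        circList (vtx n) k (len n k) ++ circList (vtx n) k (len n k)) ++ [v0 n]))
    {s : ℕ} (hs : s < len (n + 1) i) {i₀ j₀ : ℕ} (hi₀1 : 1 ≤ i₀) (hi₀n : i₀ ≤ n)
    (hj₀0 : 0 < j₀) (hj₀l : j₀ < len n i₀) (h : φ n (vtx (n + 1) i s) = vtx n i₀ j₀) :
    i ≤ i₀ := by
  rcases map_vtx_eq_or_interior hB hi1 hin hwalk hs with h' | ⟨j, t, hij, hjn, ht0, htl, h'⟩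
  · exact absurd (h.symm.trans h') (hB.vtx_ne i₀ j₀ hi₀1 hi₀n hj₀0 hj₀l)
  · obtain ⟨rfl, -⟩ :=
      hB.vtx_inj i₀ j₀ j t hi₀1 hi₀n (by omega) hjn hj₀0 hj₀l ht0 htl (h.symm.trans h')
    exact hij

theorem exists_interior_of_ne_v0
    (hB : ∀ n, 1 ≤ n → IsBouquet (E n) (v0 n) (vtx n) (len n) n)
    (hphi0 : ∀ n, φ n (v0 (n + 1)) = v0 n)
    (hphitop : ∀ n j, j ≤ len (n + 1) (n + 1) → φ n (vtx (n + 1) (n + 1) j) = v0 n)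
    (hphiwalk : ∀ n i, 1 ≤ i → i ≤ n →
      List.map (φ n) (circList (vtx (n + 1)) i (len (n + 1) i)) =
        v0 n :: (((List.range' i (n + 1 - i)).flatMap fun k =>
          circList (vtx n) k (len n k) ++ circList (vtx n) k (len n k)) ++ [v0 n]))
    (x : InvLim V φ) {n₀ : ℕ} (hx : x.1 n₀ ≠ v0 n₀) :
    ∀ m, ∃ i j, 1 ≤ i ∧ i ≤ n₀ ∧ 0 < j ∧ j < len (n₀ + m + 1) i ∧
      x.1 (n₀ + m + 1) = vtx (n₀ + m + 1) i j
  | 0 => exists_interior_of_map_ne (hB _ (by omega)) (hphi0 _) (hphitop _) (x.2 n₀ ▸ hx)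
  | m + 1 => by
    obtain ⟨i₀, j₀, hi₀1, hi₀n, hj₀0, hj₀l, hx₀⟩ := exists_interior_of_ne_v0 hB hphi0 hphitop
      hphiwalk x hx m
    have hne := (hB _ (by omega)).vtx_ne i₀ j₀ hi₀1 (by omega) hj₀0 hj₀l
    obtain ⟨i, j, hi1, hin, hj0, hjl, hxij⟩ := exists_interior_of_map_ne (hB _ (by omega))
      (hphi0 _) (hphitop _) (x.2 (n₀ + m + 1) ▸ hx₀ ▸ hne)
    have hmap : φ _ (vtx _ i j) = vtx _ i₀ j₀ := hxij ▸ hx₀ ▸ x.2 (n₀ + m + 1)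
    have hii₀ := le_of_map_vtx_eq_vtx (hB _ (by omega)) hi1 hin (hphiwalk _ i hi1 hin) hjl
      hi₀1 (by omega) hj₀0 hj₀l hmap
    exact ⟨i, j, hi1, by omega, hj0, hjl, hxij⟩

end Cover

theorem two_add_four_mul_le_len {len : ℕ → ℕ → ℕ}
    (hlen2 : ∀ n i, 1 ≤ i → i ≤ n → 2 ≤ len n i)
    (hrec : ∀ n i, 1 ≤ i → i ≤ n → len (n + 1) i = 2 + 2 * ∑ j ∈ Finset.Icc i n, len n j)
    {n i : ℕ} (hi1 : 1 ≤ i) (hin : i ≤ n) : 2 + 4 * (n + 1 - i) ≤ len (n + 1) i := by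
  have hsum : ∑ _j ∈ Finset.Icc i n, 2 ≤ ∑ j ∈ Finset.Icc i n, len n j :=
    Finset.sum_le_sum fun j hj => hlen2 n j (hi1.trans (Finset.mem_Icc.1 hj).1)
      (Finset.mem_Icc.1 hj).2
  rw [Finset.sum_const, Nat.card_Icc, smul_eq_mul] at hsum
  rw [hrec n i hi1 hin]
  omega

theorem stmt8_general
    (V : ℕ → Type) [∀ n, TopologicalSpace (V n)]
    (E : ∀ n, V n → V n → Prop) (φ : ∀ n, V (n + 1) → V n)
    (len : ℕ → ℕ → ℕ) (v0 : ∀ n, V n) (vtx : ∀ n, ℕ → ℕ → V n)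
    (hE0 : ∀ u v : V 0, E 0 u v ↔ u = v0 0 ∧ v = v0 0)
    (hends : ∀ n i, 1 ≤ i → i ≤ n → vtx n i 0 = v0 n ∧ vtx n i (len n i) = v0 n)
    (hlen2 : ∀ n i, 1 ≤ i → i ≤ n → 2 ≤ len n i)
    (hrec : ∀ n i, 1 ≤ i → i ≤ n →
      len (n + 1) i = 2 + 2 * ∑ j ∈ Finset.Icc i n, len n j)
    (hne : ∀ n i j, 1 ≤ i → i ≤ n → 0 < j → j < len n i → vtx n i j ≠ v0 n)
    (hinj : ∀ n i j i' j', 1 ≤ i → i ≤ n → 1 ≤ i' → i' ≤ n →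
      0 < j → j < len n i → 0 < j' → j' < len n i' →
      vtx n i j = vtx n i' j' → i = i' ∧ j = j')
    (hall : ∀ n, 1 ≤ n → ∀ u : V n,
      u = v0 n ∨ ∃ i j, 1 ≤ i ∧ i ≤ n ∧ 0 < j ∧ j < len n i ∧ u = vtx n i j)
    (hE : ∀ n, 1 ≤ n → ∀ u v : V n, E n u v ↔
      (u = v0 n ∧ v = v0 n) ∨
      ∃ i j, 1 ≤ i ∧ i ≤ n ∧ j < len n i ∧ u = vtx n i j ∧ v = vtx n i (j + 1))
    (hphi0 : ∀ n, φ n (v0 (n + 1)) = v0 n)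
    (hphitop : ∀ n j, j ≤ len (n + 1) (n + 1) → φ n (vtx (n + 1) (n + 1) j) = v0 n)
    (hphiwalk : ∀ n i, 1 ≤ i → i ≤ n →
      List.map (φ n) (circList (vtx (n + 1)) i (len (n + 1) i)) =
        v0 n :: (((List.range' i (n + 1 - i)).flatMap fun k =>
          circList (vtx n) k (len n k) ++ circList (vtx n) k (len n k)) ++ [v0 n]))
    (f : InvLim V φ ≃ₜ InvLim V φ)
    (hf : ∀ x y : InvLim V φ, ERel E φ x y ↔ f x = y)
    (p : InvLim V φ) (hp : ∀ n, p.1 n = v0 n) :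
    f p = p ∧ (∀ x : InvLim V φ, f x = x → x = p) ∧
      ∀ (x : InvLim V φ) (k : ℕ), 1 ≤ k → (⇑f)^[k] x = x → x = p := by
  have hB : ∀ n, 1 ≤ n → IsBouquet (E n) (v0 n) (vtx n) (len n) n := fun n hn =>
    ⟨fun i hi1 hin => (hends n i hi1 hin).1, fun i hi1 hin => (hends n i hi1 hin).2, hne n,
      hinj n, hall n hn, hE n hn⟩
  have hfp : f p = p := (hf p p).1 fun n => by
    rw [hp n]
    rcases n with _ | n
    · exact (hE0 _ _).2 ⟨rfl, rfl⟩
    · exact ((hB _ (by omega)).adj_iff _ _).2 (Or.inl ⟨rfl, rfl⟩)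
  have hperiodic : ∀ (x : InvLim V φ) (k : ℕ), 1 ≤ k → (⇑f)^[k] x = x → x = p := by
    intro x k hk hx
    by_contra hxp
    obtain ⟨n₀, hn₀⟩ : ∃ n₀, x.1 n₀ ≠ v0 n₀ := by
      by_contra! h
      exact hxp (Subtype.ext (funext fun n => (h n).trans (hp n).symm))
    obtain ⟨i, j, hi1, hin, hj0, hjl, hxN⟩ :=
      exists_interior_of_ne_v0 hB hphi0 hphitop hphiwalk x hn₀ k
    let u : ℕ → V (n₀ + k + 1) := fun m => ((⇑f)^[m] x).1 (n₀ + k + 1)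
    have hu : ∀ m, E _ (u m) (u (m + 1)) := fun m =>
      (hf _ _).2 (Function.iterate_succ_apply' f m x).symm _
    have hper : Function.Periodic u k := fun m => by
      simp only [u, Function.iterate_add_apply, hx]
    have hk_len := (hB _ (by omega)).len_le_period hi1 (by omega) hu hk hper hj0 hjl
      (m := 0) hxN
    have hlen_lb := two_add_four_mul_le_len hlen2 hrec hi1 (show i ≤ n₀ + k by omega)
    omega
  exact ⟨hfp, fun x hx => hperiodic x 1 le_rfl hx, hperiodic⟩

theorem stmt8
    (V : ℕ → Type) [∀ n, TopologicalSpace (V n)] [∀ n, DiscreteTopology (V n)]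
    [∀ n, Fintype (V n)]
    (E : ∀ n, V n → V n → Prop) (φ : ∀ n, V (n + 1) → V n)
    (len : ℕ → ℕ → ℕ) (v0 : ∀ n, V n) (vtx : ∀ n, ℕ → ℕ → V n)
    (hV0 : ∀ u : V 0, u = v0 0)
    (hE0 : ∀ u v : V 0, E 0 u v ↔ u = v0 0 ∧ v = v0 0)
    (hends : ∀ n i, 1 ≤ i → i ≤ n → vtx n i 0 = v0 n ∧ vtx n i (len n i) = v0 n)
    (hlen2 : ∀ n i, 1 ≤ i → i ≤ n → 2 ≤ len n i)
    (hrec : ∀ n i, 1 ≤ i → i ≤ n →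
      len (n + 1) i = 2 + 2 * ∑ j ∈ Finset.Icc i n, len n j)
    (hne : ∀ n i j, 1 ≤ i → i ≤ n → 0 < j → j < len n i → vtx n i j ≠ v0 n)
    (hinj : ∀ n i j i' j', 1 ≤ i → i ≤ n → 1 ≤ i' → i' ≤ n →
      0 < j → j < len n i → 0 < j' → j' < len n i' →
      vtx n i j = vtx n i' j' → i = i' ∧ j = j')
    (hall : ∀ n, 1 ≤ n → ∀ u : V n,
      u = v0 n ∨ ∃ i j, 1 ≤ i ∧ i ≤ n ∧ 0 < j ∧ j < len n i ∧ u = vtx n i j)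
    (hE : ∀ n, 1 ≤ n → ∀ u v : V n, E n u v ↔
      (u = v0 n ∧ v = v0 n) ∨
      ∃ i j, 1 ≤ i ∧ i ≤ n ∧ j < len n i ∧ u = vtx n i j ∧ v = vtx n i (j + 1))
    (hphi0 : ∀ n, φ n (v0 (n + 1)) = v0 n)
    (hphitop : ∀ n j, j ≤ len (n + 1) (n + 1) → φ n (vtx (n + 1) (n + 1) j) = v0 n)
    (hphiwalk : ∀ n i, 1 ≤ i → i ≤ n →
      List.map (φ n) (circList (vtx (n + 1)) i (len (n + 1) i)) =
        v0 n :: (((List.range' i (n + 1 - i)).flatMap fun k =>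
          circList (vtx n) k (len n k) ++ circList (vtx n) k (len n k)) ++ [v0 n]))
    (hcov : ∀ n, IsCover (E (n + 1)) (E n) (φ n))
    (f : InvLim V φ ≃ₜ InvLim V φ)
    (hf : ∀ x y : InvLim V φ, ERel E φ x y ↔ f x = y)
    (m : MetricSpace (InvLim V φ))
    (hm : mtop m = (inferInstance : TopologicalSpace (InvLim V φ)))
    (p : InvLim V φ) (hp : ∀ n, p.1 n = v0 n) :
    f p = p ∧ (∀ x : InvLim V φ, f x = x → x = p) ∧
      ∀ (x : InvLim V φ) (k : ℕ), 1 ≤ k → (⇑f)^[k] x = x → x = p :=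
  stmt8_general V E φ len v0 vtx hE0 hends hlen2 hrec hne hinj hall hE hphi0 hphitop hphiwalk f hf p
    hp
end

section
/- In the Cantor system (X,f) of the construction, for every x ∈ X one has liminf_{k→∞} d(f^k(x), p) = 0, where p = (v_{0,0}, v_{1,0}, v_{2,0}, …). -/
open Filter Topology
open scoped ENNReal

theorem stmt9
    (V : ℕ → Type) [∀ n, TopologicalSpace (V n)] [∀ n, DiscreteTopology (V n)]
    [∀ n, Fintype (V n)]
    (E : ∀ n, V n → V n → Prop) (φ : ∀ n, V (n + 1) → V n)
    (len : ℕ → ℕ → ℕ) (v0 : ∀ n, V n) (vtx : ∀ n, ℕ → ℕ → V n)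
    (hV0 : ∀ u : V 0, u = v0 0)
    (hE0 : ∀ u v : V 0, E 0 u v ↔ u = v0 0 ∧ v = v0 0)
    (hends : ∀ n i, 1 ≤ i → i ≤ n → vtx n i 0 = v0 n ∧ vtx n i (len n i) = v0 n)
    (hlen2 : ∀ n i, 1 ≤ i → i ≤ n → 2 ≤ len n i)
    (hrec : ∀ n i, 1 ≤ i → i ≤ n →
      len (n + 1) i = 2 + 2 * ∑ j ∈ Finset.Icc i n, len n j)
    (hne : ∀ n i j, 1 ≤ i → i ≤ n → 0 < j → j < len n i → vtx n i j ≠ v0 n)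
    (hinj : ∀ n i j i' j', 1 ≤ i → i ≤ n → 1 ≤ i' → i' ≤ n →
      0 < j → j < len n i → 0 < j' → j' < len n i' →
      vtx n i j = vtx n i' j' → i = i' ∧ j = j')
    (hall : ∀ n, 1 ≤ n → ∀ u : V n,
      u = v0 n ∨ ∃ i j, 1 ≤ i ∧ i ≤ n ∧ 0 < j ∧ j < len n i ∧ u = vtx n i j)
    (hE : ∀ n, 1 ≤ n → ∀ u v : V n, E n u v ↔
      (u = v0 n ∧ v = v0 n) ∨
      ∃ i j, 1 ≤ i ∧ i ≤ n ∧ j < len n i ∧ u = vtx n i j ∧ v = vtx n i (j + 1))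
    (hphi0 : ∀ n, φ n (v0 (n + 1)) = v0 n)
    (hphitop : ∀ n j, j ≤ len (n + 1) (n + 1) → φ n (vtx (n + 1) (n + 1) j) = v0 n)
    (hphiwalk : ∀ n i, 1 ≤ i → i ≤ n →
      List.map (φ n) (circList (vtx (n + 1)) i (len (n + 1) i)) =
        v0 n :: (((List.range' i (n + 1 - i)).flatMap fun k =>
          circList (vtx n) k (len n k) ++ circList (vtx n) k (len n k)) ++ [v0 n]))
    (hcov : ∀ n, IsCover (E (n + 1)) (E n) (φ n))
    (f : InvLim V φ ≃ₜ InvLim V φ)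
    (hf : ∀ x y : InvLim V φ, ERel E φ x y ↔ f x = y)
    (m : MetricSpace (InvLim V φ))
    (hm : mtop m = (inferInstance : TopologicalSpace (InvLim V φ)))
    (p : InvLim V φ) (hp : ∀ n, p.1 n = v0 n) :
    ∀ x : InvLim V φ,
      Filter.liminf (fun k => mdist m ((⇑f)^[k] x) p) Filter.atTop = 0 := by
  intro x
  set u : ℕ → ℝ := fun k => mdist m ((⇑f)^[k] x) p with hu
  -- every iterate step is an edge at every level
  have hchain : ∀ (n k : ℕ), E n (((⇑f)^[k] x).1 n) (((⇑f)^[k+1] x).1 n) := by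
    intro n k
    have h1 : ERel E φ ((⇑f)^[k] x) (f ((⇑f)^[k] x)) := (hf _ _).mpr rfl
    rw [Function.iterate_succ_apply' f k x]
    exact h1 n
  -- unique successor of interior circuit vertices
  have hstep : ∀ n, 1 ≤ n → ∀ i j v, 1 ≤ i → i ≤ n → 0 < j → j < len n i →
      E n (vtx n i j) v → v = vtx n i (j + 1) := by
    intro n hn i j v hi1 hin hj0 hjl hEv
    rw [hE n hn] at hEv
    rcases hEv with ⟨h1, _⟩ | ⟨i', j', hi'1, hi'n, hj', hu', hv'⟩
    · exact absurd h1 (hne n i j hi1 hin hj0 hjl)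
    · rcases Nat.eq_zero_or_pos j' with h0 | hj'0
      · subst h0
        rw [(hends n i' hi'1 hi'n).1] at hu'
        exact absurd hu' (hne n i j hi1 hin hj0 hjl)
      · obtain ⟨hii, hjj⟩ := hinj n i j i' j' hi1 hin hi'1 hi'n hj0 hjl hj'0 hj' hu'
        subst hii; subst hjj; exact hv'
  -- from an interior circuit vertex, a chain reaches v0 within the remaining length
  have hreach : ∀ n, 1 ≤ n → ∀ d (a : ℕ → V n), (∀ k, E n (a k) (a (k+1))) →
      ∀ i j, 1 ≤ i → i ≤ n → 0 < j → j + d = len n i → a 0 = vtx n i j →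
      ∃ k, a k = v0 n := by
    intro n hn d
    induction d with
    | zero =>
      intro a ha i j hi1 hin hj0 hjd h0
      refine ⟨0, ?_⟩
      rw [h0]
      have : j = len n i := by omega
      rw [this]
      exact (hends n i hi1 hin).2
    | succ d ih =>
      intro a ha i j hi1 hin hj0 hjd h0
      have hjl : j < len n i := by omega
      have h1 : a 1 = vtx n i (j + 1) := by
        have := ha 0
        rw [h0] at this
        exact hstep n hn i j (a 1) hi1 hin hj0 hjl this
      obtain ⟨k, hk⟩ := ih (fun k => a (k + 1)) (fun k => ha (k + 1)) i (j + 1)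
        hi1 hin (Nat.succ_pos j) (by omega) h1
      exact ⟨k + 1, hk⟩
  -- every chain returns to v0
  have hreturn : ∀ n, 1 ≤ n → ∀ (a : ℕ → V n), (∀ k, E n (a k) (a (k+1))) →
      ∃ k, a k = v0 n := by
    intro n hn a ha
    rcases hall n hn (a 0) with h0 | ⟨i, j, hi1, hin, hj0, hjl, h0⟩
    · exact ⟨0, h0⟩
    · exact hreach n hn (len n i - j) a ha i j hi1 hin hj0 (by omega) h0
  -- being at v0 propagates downwards
  have hdown : ∀ (y : InvLim V φ) (n : ℕ), y.1 (n+1) = v0 (n+1) → y.1 n = v0 n := by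
    intro y n h
    rw [← y.2 n, h, hphi0]
  have hdown' : ∀ (y : InvLim V φ) (n l : ℕ), l ≤ n → y.1 n = v0 n → y.1 l = v0 l := by
    intro y n
    induction n with
    | zero =>
      intro l hl h
      have hl0 : l = 0 := by omega
      rw [hl0]; exact hV0 _
    | succ n ih =>
      intro l hl h
      rcases Nat.lt_or_ge l (n+1) with h1 | h1
      · exact ih l (by omega) (hdown y n h)
      · have : l = n + 1 := by omega
        rw [this]; exact h
  -- frequently at v0 at every level
  have hfreqlvl : ∀ n : ℕ, ∀ K : ℕ, ∃ k, K ≤ k ∧ ((⇑f)^[k] x).1 n = v0 n := by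
    intro n K
    obtain ⟨k, hk⟩ := hreturn (n+1) (Nat.succ_le_succ (Nat.zero_le n))
      (fun t => ((⇑f)^[K + t] x).1 (n+1))
      (fun t => by have h := hchain (n+1) (K + t); rwa [Nat.add_assoc] at h)
    exact ⟨K + k, Nat.le_add_right K k,
      hdown' ((⇑f)^[K + k] x) (n+1) n (Nat.le_succ n) hk⟩
  -- topology: the sets S n form a neighborhood basis at p
  set S : ℕ → Set (InvLim V φ) := fun n => {y | y.1 n = v0 n} with hS
  have hScl : ∀ n, IsClosed (S n) :=
    fun n => isClosed_eq ((continuous_apply n).comp continuous_subtype_val) continuous_const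
  have hSmono : ∀ n, S (n+1) ⊆ S n := fun n y hy => hdown y n hy
  haveI : CompactSpace (InvLim V φ) := by
    refine isCompact_iff_compactSpace.mp (IsClosed.isCompact ?_)
    show IsClosed {x : ∀ n, V n | ∀ n, φ n (x (n + 1)) = x n}
    have : {x : ∀ n, V n | ∀ n, φ n (x (n + 1)) = x n}
        = ⋂ n, {x : ∀ n, V n | φ n (x (n + 1)) = x n} := by
      ext z; simp [Set.mem_iInter]
    rw [this]
    exact isClosed_iInter fun n => isClosed_eq
      (Continuous.comp continuous_of_discreteTopology (continuous_apply (n+1)))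
      (continuous_apply n)
  have hnbhd : ∀ U : Set (InvLim V φ), IsOpen U → p ∈ U → ∃ n, S n ⊆ U := by
    intro U hUo hpU
    by_contra hcon
    push_neg at hcon
    have hZne : ∀ n, (S n \ U).Nonempty := by
      intro n
      obtain ⟨y, hy1, hy2⟩ := Set.not_subset.mp (hcon n)
      exact ⟨y, hy1, hy2⟩
    obtain ⟨y, hy⟩ := IsCompact.nonempty_iInter_of_sequence_nonempty_isCompact_isClosed
      (fun n => S n \ U) (fun n => Set.diff_subset_diff_left (hSmono n)) hZne
      (((hScl 0).isCompact).diff hUo) (fun n => (hScl n).sdiff hUo)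
    have hyS : ∀ n, y.1 n = v0 n := fun n => (Set.mem_iInter.mp hy n).1
    have hyU : y ∉ U := (Set.mem_iInter.mp hy 0).2
    have : y = p := Subtype.ext (funext fun n => by rw [hyS n, hp n])
    rw [this] at hyU
    exact hyU hpU
  -- frequently small distance
  have hfreq : ∀ ε : ℝ, 0 < ε → ∃ᶠ k in Filter.atTop, u k < ε := by
    intro ε hε
    have hUopen : @IsOpen _ (mtop m) {y | mdist m y p < ε} :=
      @Metric.isOpen_ball _ m.toPseudoMetricSpace p ε
    rw [hm] at hUopen
    have hpU : p ∈ {y | mdist m y p < ε} := by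
      show mdist m p p < ε
      have : mdist m p p = 0 := @dist_self _ m.toPseudoMetricSpace p
      rw [this]; exact hε
    obtain ⟨n, hn⟩ := hnbhd _ hUopen hpU
    rw [Filter.frequently_atTop]
    intro K
    obtain ⟨k, hKk, hk⟩ := hfreqlvl n K
    exact ⟨k, hKk, hn hk⟩
  have hnonneg : ∀ k, 0 ≤ u k := fun k => @dist_nonneg _ m.toPseudoMetricSpace _ _
  have hbdd : Filter.IsBoundedUnder (· ≥ ·) Filter.atTop u :=
    Filter.isBoundedUnder_of ⟨0, hnonneg⟩
  have hcob : Filter.IsCoboundedUnder (· ≥ ·) Filter.atTop u := by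
    refine Filter.IsCobounded.mk 1 ?_
    intro s hs
    have hs' : ∀ᶠ k in Filter.atTop, u k ∈ s := hs
    obtain ⟨k, hk1, hk2⟩ := ((hfreq 1 one_pos).and_eventually hs').exists
    exact ⟨u k, hk2, le_of_lt hk1⟩
  refine le_antisymm ?_ (Filter.le_liminf_of_le hcob (Filter.Eventually.of_forall hnonneg))
  refine le_of_forall_pos_le_add ?_
  intro ε hε
  rw [zero_add]
  exact Filter.liminf_le_of_frequently_le ((hfreq ε hε).mono fun k hk => le_of_lt hk) hbdd
end

section
/- In the construction, for every x = (u₀, u₁, u₂, …) ∈ X with x ≠ p, there exists N > 0 such that deg(u_N) = deg(u_{N+1}) = ⋯ = deg(x); that is, deg(uₙ) = deg(x) for all n ≥ N. -/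
open Filter Topology
open scoped ENNReal

/-! The degree of the coordinates of a point can only drop along the inverse sequence: the circuit
`c_{n+1,i}` maps onto the walk `e_{n,0} + 2c_{n,i} + ⋯ + 2c_{n,n} + e_{n,0}`, all of whose vertices
have degree `≥ i`, and `c_{n+1,n+1}` collapses to `v_{n,0}`. So `n ↦ deg(uₙ)` is an antitone
sequence in the well-ordered `ℕ∞`, hence eventually equal to its infimum `deg(x)`. -/

theorem Antitone.exists_forall_ge_eq_iInf {α : Type*} [CompleteLinearOrder α] [WellFoundedLT α]
    {f : ℕ → α} (hf : Antitone f) : ∃ N, ∀ n, N ≤ n → f n = ⨅ k, f k := by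
  obtain ⟨N, hN⟩ := ciInf_mem f
  exact ⟨N, fun n hn => le_antisymm (hN ▸ hf hn) (iInf_le f n)⟩

section Degree

variable {V : ℕ → Type} {φ : ∀ n, V (n + 1) → V n} {len : ℕ → ℕ → ℕ} {v0 : ∀ n, V n}
  {vtx : ∀ n, ℕ → ℕ → V n} {degv : ∀ n, V n → ℕ∞}

theorem le_degv_vtx
    (hends : ∀ n i, 1 ≤ i → i ≤ n → vtx n i 0 = v0 n ∧ vtx n i (len n i) = v0 n)
    (hdegv0 : ∀ n, degv n (v0 n) = ⊤)
    (hdegvi : ∀ n i j, 1 ≤ i → i ≤ n → 0 < j → j < len n i →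
      degv n (vtx n i j) = (i : ℕ∞))
    {n k j : ℕ} (hk : 1 ≤ k) (hkn : k ≤ n) (hj : j < len n k) :
    (k : ℕ∞) ≤ degv n (vtx n k j) := by
  rcases j.eq_zero_or_pos with rfl | hj0
  · rw [(hends n k hk hkn).1, hdegv0]
    exact le_top
  · rw [hdegvi n k j hk hkn hj0 hj]

theorem le_degv_of_mem_walk
    (hends : ∀ n i, 1 ≤ i → i ≤ n → vtx n i 0 = v0 n ∧ vtx n i (len n i) = v0 n)
    (hdegv0 : ∀ n, degv n (v0 n) = ⊤)
    (hdegvi : ∀ n i j, 1 ≤ i → i ≤ n → 0 < j → j < len n i →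
      degv n (vtx n i j) = (i : ℕ∞))
    {n i : ℕ} (hi : 1 ≤ i) {v : V n}
    (hv : v ∈ v0 n :: (((List.range' i (n + 1 - i)).flatMap fun k =>
      circList (vtx n) k (len n k) ++ circList (vtx n) k (len n k)) ++ [v0 n])) :
    (i : ℕ∞) ≤ degv n v := by
  simp only [List.mem_cons, List.mem_append, List.mem_flatMap, List.mem_range'_1, circList,
    List.mem_ofFn, or_self, List.not_mem_nil, or_false] at hv
  rcases hv with rfl | ⟨k, ⟨hik, hkn⟩, ⟨j, rfl⟩⟩ | rfl
  · rw [hdegv0]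
    exact le_top
  · exact le_trans (by exact_mod_cast hik)
      (le_degv_vtx hends hdegv0 hdegvi (hi.trans hik) (by omega) j.2)
  · rw [hdegv0]
    exact le_top

theorem degv_succ_le_degv_map
    (hends : ∀ n i, 1 ≤ i → i ≤ n → vtx n i 0 = v0 n ∧ vtx n i (len n i) = v0 n)
    (hall : ∀ n, 1 ≤ n → ∀ u : V n,
      u = v0 n ∨ ∃ i j, 1 ≤ i ∧ i ≤ n ∧ 0 < j ∧ j < len n i ∧ u = vtx n i j)
    (hphi0 : ∀ n, φ n (v0 (n + 1)) = v0 n)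
    (hphitop : ∀ n j, j ≤ len (n + 1) (n + 1) → φ n (vtx (n + 1) (n + 1) j) = v0 n)
    (hphiwalk : ∀ n i, 1 ≤ i → i ≤ n →
      List.map (φ n) (circList (vtx (n + 1)) i (len (n + 1) i)) =
        v0 n :: (((List.range' i (n + 1 - i)).flatMap fun k =>
          circList (vtx n) k (len n k) ++ circList (vtx n) k (len n k)) ++ [v0 n]))
    (hdegv0 : ∀ n, degv n (v0 n) = ⊤)
    (hdegvi : ∀ n i j, 1 ≤ i → i ≤ n → 0 < j → j < len n i →
      degv n (vtx n i j) = (i : ℕ∞))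
    (n : ℕ) (u : V (n + 1)) : degv (n + 1) u ≤ degv n (φ n u) := by
  rcases hall (n + 1) n.succ_pos u with rfl | ⟨i, j, hi, hin, hj0, hj, rfl⟩
  · rw [hphi0, hdegv0, hdegv0]
  rw [hdegvi (n + 1) i j hi hin hj0 hj]
  rcases hin.eq_or_lt with rfl | hin
  · rw [hphitop n j hj.le, hdegv0]
    exact le_top
  · refine le_degv_of_mem_walk hends hdegv0 hdegvi hi ?_
    rw [← hphiwalk n i hi (by omega)]
    exact List.mem_map_of_mem (List.mem_ofFn.2 ⟨⟨j, hj⟩, rfl⟩)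

end Degree

theorem stmt11_general
    (V : ℕ → Type)
    (φ : ∀ n, V (n + 1) → V n)
    (len : ℕ → ℕ → ℕ) (v0 : ∀ n, V n) (vtx : ∀ n, ℕ → ℕ → V n)
    (hends : ∀ n i, 1 ≤ i → i ≤ n → vtx n i 0 = v0 n ∧ vtx n i (len n i) = v0 n)
    (hall : ∀ n, 1 ≤ n → ∀ u : V n,
      u = v0 n ∨ ∃ i j, 1 ≤ i ∧ i ≤ n ∧ 0 < j ∧ j < len n i ∧ u = vtx n i j)
    (hphi0 : ∀ n, φ n (v0 (n + 1)) = v0 n)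
    (hphitop : ∀ n j, j ≤ len (n + 1) (n + 1) → φ n (vtx (n + 1) (n + 1) j) = v0 n)
    (hphiwalk : ∀ n i, 1 ≤ i → i ≤ n →
      List.map (φ n) (circList (vtx (n + 1)) i (len (n + 1) i)) =
        v0 n :: (((List.range' i (n + 1 - i)).flatMap fun k =>
          circList (vtx n) k (len n k) ++ circList (vtx n) k (len n k)) ++ [v0 n]))
    (p : InvLim V φ)
    (degv : ∀ n, V n → ℕ∞)
    (hdegv0 : ∀ n, degv n (v0 n) = ⊤)
    (hdegvi : ∀ n i j, 1 ≤ i → i ≤ n → 0 < j → j < len n i →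
      degv n (vtx n i j) = (i : ℕ∞)) :
    ∀ x : InvLim V φ, x ≠ p →
      ∃ N : ℕ, 0 < N ∧ ∀ n, N ≤ n → degv n (x.1 n) = ⨅ k, degv k (x.1 k) := by
  intro x _
  have hanti : Antitone fun n => degv n (x.1 n) := antitone_nat_of_succ_le fun n =>
    x.2 n ▸ degv_succ_le_degv_map hends hall hphi0 hphitop hphiwalk hdegv0 hdegvi n (x.1 (n + 1))
  obtain ⟨N, hN⟩ := hanti.exists_forall_ge_eq_iInf
  exact ⟨N + 1, N.succ_pos, fun n hn => hN n (by omega)⟩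

theorem stmt11
    (V : ℕ → Type) [∀ n, TopologicalSpace (V n)] [∀ n, DiscreteTopology (V n)]
    [∀ n, Fintype (V n)]
    (E : ∀ n, V n → V n → Prop) (φ : ∀ n, V (n + 1) → V n)
    (len : ℕ → ℕ → ℕ) (v0 : ∀ n, V n) (vtx : ∀ n, ℕ → ℕ → V n)
    (hV0 : ∀ u : V 0, u = v0 0)
    (hE0 : ∀ u v : V 0, E 0 u v ↔ u = v0 0 ∧ v = v0 0)
    (hends : ∀ n i, 1 ≤ i → i ≤ n → vtx n i 0 = v0 n ∧ vtx n i (len n i) = v0 n)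
    (hlen2 : ∀ n i, 1 ≤ i → i ≤ n → 2 ≤ len n i)
    (hrec : ∀ n i, 1 ≤ i → i ≤ n →
      len (n + 1) i = 2 + 2 * ∑ j ∈ Finset.Icc i n, len n j)
    (hne : ∀ n i j, 1 ≤ i → i ≤ n → 0 < j → j < len n i → vtx n i j ≠ v0 n)
    (hinj : ∀ n i j i' j', 1 ≤ i → i ≤ n → 1 ≤ i' → i' ≤ n →
      0 < j → j < len n i → 0 < j' → j' < len n i' →
      vtx n i j = vtx n i' j' → i = i' ∧ j = j')
    (hall : ∀ n, 1 ≤ n → ∀ u : V n,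
      u = v0 n ∨ ∃ i j, 1 ≤ i ∧ i ≤ n ∧ 0 < j ∧ j < len n i ∧ u = vtx n i j)
    (hE : ∀ n, 1 ≤ n → ∀ u v : V n, E n u v ↔
      (u = v0 n ∧ v = v0 n) ∨
      ∃ i j, 1 ≤ i ∧ i ≤ n ∧ j < len n i ∧ u = vtx n i j ∧ v = vtx n i (j + 1))
    (hphi0 : ∀ n, φ n (v0 (n + 1)) = v0 n)
    (hphitop : ∀ n j, j ≤ len (n + 1) (n + 1) → φ n (vtx (n + 1) (n + 1) j) = v0 n)
    (hphiwalk : ∀ n i, 1 ≤ i → i ≤ n →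
      List.map (φ n) (circList (vtx (n + 1)) i (len (n + 1) i)) =
        v0 n :: (((List.range' i (n + 1 - i)).flatMap fun k =>
          circList (vtx n) k (len n k) ++ circList (vtx n) k (len n k)) ++ [v0 n]))
    (hcov : ∀ n, IsCover (E (n + 1)) (E n) (φ n))
    (p : InvLim V φ) (hp : ∀ n, p.1 n = v0 n)
    (degv : ∀ n, V n → ℕ∞)
    (hdegv0 : ∀ n, degv n (v0 n) = ⊤)
    (hdegvi : ∀ n i j, 1 ≤ i → i ≤ n → 0 < j → j < len n i →
      degv n (vtx n i j) = (i : ℕ∞)) :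
    ∀ x : InvLim V φ, x ≠ p →
      ∃ N : ℕ, 0 < N ∧ ∀ n, N ≤ n → degv n (x.1 n) = ⨅ k, degv k (x.1 k) :=
  stmt11_general V φ len v0 vtx hends hall hphi0 hphitop hphiwalk p degv hdegv0 hdegvi
end

section
/- In the construction, the degree is constant along orbits: for every x ∈ X, deg(f(x)) = deg(x). -/
open Filter Topology
open scoped ENNReal

section WalkAux
variable {Vn : Type} (v0n : Vn) (vtxn : ℕ → ℕ → Vn) (lenn : ℕ → ℕ) (i n : ℕ)

/-- the image walk list appearing on the right-hand side of `hphiwalk`. -/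
def walkL : List Vn :=
  v0n :: (((List.range' i (n + 1 - i)).flatMap fun k =>
      circList vtxn k (lenn k) ++ circList vtxn k (lenn k)) ++ [v0n])

lemma walkL_mem (hin : i ≤ n) {z : Vn} (hz : z ∈ walkL v0n vtxn lenn i n) :
    z = v0n ∨ ∃ k m, i ≤ k ∧ k ≤ n ∧ m < lenn k ∧ z = vtxn k m := by
  simp only [walkL, List.mem_cons, List.mem_append, List.mem_flatMap, List.mem_singleton,
    circList, List.mem_ofFn, Set.mem_range, List.mem_range'] at hz
  rcases hz with h | ⟨k, ⟨j, hj, hk⟩, ⟨m, hm⟩ | ⟨m, hm⟩⟩ | h | h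
  · exact Or.inl h
  · exact Or.inr ⟨k, m, by omega, by omega, m.2, hm.symm⟩
  · exact Or.inr ⟨k, m, by omega, by omega, m.2, hm.symm⟩
  · exact Or.inl h
  · simp at h

lemma walkL_nonempty : walkL v0n vtxn lenn i n ≠ [] := by simp [walkL]

lemma walkL_getLast :
    (walkL v0n vtxn lenn i n)[(walkL v0n vtxn lenn i n).length - 1]'
      (by simp [walkL]) = v0n := by
  rw [← List.getLast_eq_getElem (walkL_nonempty v0n vtxn lenn i n)]
  unfold walkL
  rw [List.getLast_cons (by simp), List.getLast_concat]

lemma walkL_getElem_last {j : ℕ} (hj : j + 1 = (walkL v0n vtxn lenn i n).length) :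
    (walkL v0n vtxn lenn i n)[j]'(by omega) = v0n := by
  have h : j = (walkL v0n vtxn lenn i n).length - 1 := by omega
  subst h
  exact walkL_getLast v0n vtxn lenn i n

lemma walkL_getElem_one (hin : i ≤ n) (hl : 1 ≤ lenn i)
    (h : 1 < (walkL v0n vtxn lenn i n).length) :
    (walkL v0n vtxn lenn i n)[1] = vtxn i 0 := by
  have h1 : n + 1 - i = (n - i) + 1 := by omega
  simp only [walkL, h1, List.range'_succ, List.flatMap_cons] at h ⊢
  rw [List.getElem_cons_succ]
  rw [List.getElem_append_left (by simp [circList]; omega)]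
  rw [List.getElem_append_left (by simp [circList]; omega)]
  rw [List.getElem_append_left (by simp [circList]; omega)]
  simp [circList]

end WalkAux

theorem stmt12
    (V : ℕ → Type) [∀ n, TopologicalSpace (V n)] [∀ n, DiscreteTopology (V n)]
    [∀ n, Fintype (V n)]
    (E : ∀ n, V n → V n → Prop) (φ : ∀ n, V (n + 1) → V n)
    (len : ℕ → ℕ → ℕ) (v0 : ∀ n, V n) (vtx : ∀ n, ℕ → ℕ → V n)
    (hV0 : ∀ u : V 0, u = v0 0)
    (hE0 : ∀ u v : V 0, E 0 u v ↔ u = v0 0 ∧ v = v0 0)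
    (hends : ∀ n i, 1 ≤ i → i ≤ n → vtx n i 0 = v0 n ∧ vtx n i (len n i) = v0 n)
    (hlen2 : ∀ n i, 1 ≤ i → i ≤ n → 2 ≤ len n i)
    (hrec : ∀ n i, 1 ≤ i → i ≤ n →
      len (n + 1) i = 2 + 2 * ∑ j ∈ Finset.Icc i n, len n j)
    (hne : ∀ n i j, 1 ≤ i → i ≤ n → 0 < j → j < len n i → vtx n i j ≠ v0 n)
    (hinj : ∀ n i j i' j', 1 ≤ i → i ≤ n → 1 ≤ i' → i' ≤ n →
      0 < j → j < len n i → 0 < j' → j' < len n i' →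
      vtx n i j = vtx n i' j' → i = i' ∧ j = j')
    (hall : ∀ n, 1 ≤ n → ∀ u : V n,
      u = v0 n ∨ ∃ i j, 1 ≤ i ∧ i ≤ n ∧ 0 < j ∧ j < len n i ∧ u = vtx n i j)
    (hE : ∀ n, 1 ≤ n → ∀ u v : V n, E n u v ↔
      (u = v0 n ∧ v = v0 n) ∨
      ∃ i j, 1 ≤ i ∧ i ≤ n ∧ j < len n i ∧ u = vtx n i j ∧ v = vtx n i (j + 1))
    (hphi0 : ∀ n, φ n (v0 (n + 1)) = v0 n)
    (hphitop : ∀ n j, j ≤ len (n + 1) (n + 1) → φ n (vtx (n + 1) (n + 1) j) = v0 n)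
    (hphiwalk : ∀ n i, 1 ≤ i → i ≤ n →
      List.map (φ n) (circList (vtx (n + 1)) i (len (n + 1) i)) =
        v0 n :: (((List.range' i (n + 1 - i)).flatMap fun k =>
          circList (vtx n) k (len n k) ++ circList (vtx n) k (len n k)) ++ [v0 n]))
    (hcov : ∀ n, IsCover (E (n + 1)) (E n) (φ n))
    (f : InvLim V φ ≃ₜ InvLim V φ)
    (hf : ∀ x y : InvLim V φ, ERel E φ x y ↔ f x = y)
    (degv : ∀ n, V n → ℕ∞)
    (hdegv0 : ∀ n, degv n (v0 n) = ⊤)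
    (hdegvi : ∀ n i j, 1 ≤ i → i ≤ n → 0 < j → j < len n i →
      degv n (vtx n i j) = (i : ℕ∞)) :
    ∀ x : InvLim V φ,
      (⨅ n, degv n ((f x).1 n)) = ⨅ n, degv n (x.1 n) := by
  intro x
  have hEy : ∀ n, E n (x.1 n) ((f x).1 n) := (hf x (f x)).mpr rfl
  have hRe : ∀ n i, 1 ≤ i → i ≤ n →
      List.map (φ n) (circList (vtx (n + 1)) i (len (n + 1) i)) =
        walkL (v0 n) (vtx n) (len n) i n := by
    intro n i h1 h2
    rw [walkL]
    exact hphiwalk n i h1 h2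
  have hWlen : ∀ n i, 1 ≤ i → i ≤ n →
      (walkL (v0 n) (vtx n) (len n) i n).length = len (n + 1) i := by
    intro n i h1 h2
    have := congrArg List.length (hRe n i h1 h2)
    simpa [circList] using this.symm
  have hW : ∀ n i j (h1 : 1 ≤ i) (h2 : i ≤ n) (hj : j < len (n + 1) i),
      φ n (vtx (n + 1) i j) =
        (walkL (v0 n) (vtx n) (len n) i n)[j]'(by rw [hWlen n i h1 h2]; exact hj) := by
    intro n i j h1 h2 hj
    have h' : j < (List.map (φ n) (circList (vtx (n + 1)) i (len (n + 1) i))).length := by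
      simpa [circList] using hj
    have h3 := List.getElem_of_eq (hRe n i h1 h2) h'
    rw [List.getElem_map] at h3
    rw [← h3]
    congr 1
    simp [circList]
  have hdeg_top : ∀ n u, 1 ≤ n → degv n u = ⊤ → u = v0 n := by
    intro n u hn h
    rcases hall n hn u with h0 | ⟨i, j, h1, h2, h3, h4, rfl⟩
    · exact h0
    · rw [hdegvi n i j h1 h2 h3 h4] at h
      exact absurd h (by simp)
  have hWdeg : ∀ n i, 1 ≤ i → i ≤ n → ∀ z ∈ walkL (v0 n) (vtx n) (len n) i n,
      (i : ℕ∞) ≤ degv n z := by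
    intro n i h1 h2 z hz
    rcases walkL_mem _ _ _ _ _ h2 hz with rfl | ⟨k, m, hik, hkn, hm, rfl⟩
    · simp [hdegv0]
    · rcases Nat.eq_zero_or_pos m with rfl | hm0
      · rw [(hends n k (le_trans h1 hik) hkn).1, hdegv0]; exact le_top
      · rw [hdegvi n k m (le_trans h1 hik) hkn hm0 hm]
        exact_mod_cast hik
  have hstep : ∀ (z : InvLim V φ) n, degv (n + 1) (z.1 (n + 1)) ≤ degv n (z.1 n) := by
    intro z n
    rw [← z.2 n]
    rcases hall (n + 1) (by omega) (z.1 (n + 1)) with h0 | ⟨i, j, h1, h2, h3, h4, hzv⟩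
    · rw [h0, hphi0, hdegv0, hdegv0]
    · rw [hzv, hdegvi (n + 1) i j h1 h2 h3 h4]
      rcases eq_or_lt_of_le h2 with h2' | h2'
      · subst h2'
        rw [hphitop n j (le_of_lt h4), hdegv0]
        exact le_top
      · have h2n : i ≤ n := by omega
        rw [hW n i j h1 h2n h4]
        exact hWdeg n i h1 h2n _ (List.getElem_mem _)
  have hAnti : ∀ z : InvLim V φ, Antitone fun n => degv n (z.1 n) :=
    fun z => antitone_nat_of_succ_le (hstep z)
  have hEvent : ∀ (z : InvLim V φ) (i : ℕ), (⨅ n, degv n (z.1 n)) = (i : ℕ∞) →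
      ∃ N, ∀ n, N ≤ n → degv n (z.1 n) = (i : ℕ∞) := by
    intro z i hi
    have hlt : (⨅ n, degv n (z.1 n)) < (i : ℕ∞) + 1 := by
      rw [hi]
      exact (ENat.lt_add_one_iff (by simp)).mpr le_rfl
    obtain ⟨N, hN⟩ := iInf_lt_iff.mp hlt
    have hNle : degv N (z.1 N) ≤ (i : ℕ∞) := (ENat.lt_add_one_iff (by simp)).mp hN
    refine ⟨N, fun n hn => le_antisymm (le_trans (hAnti z hn) hNle) ?_⟩
    rw [← hi]
    exact iInf_le _ n
  have hshape : ∀ (z : InvLim V φ) (i : ℕ) (n : ℕ), 1 ≤ n → degv n (z.1 n) = (i : ℕ∞) →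
      1 ≤ i ∧ i ≤ n ∧ ∃ j, 0 < j ∧ j < len n i ∧ z.1 n = vtx n i j := by
    intro z i n hn hd
    rcases hall n hn (z.1 n) with h0 | ⟨i', j, h1, h2, h3, h4, hzv⟩
    · rw [h0, hdegv0] at hd
      exact absurd hd.symm (by simp)
    · rw [hzv, hdegvi n i' j h1 h2 h3 h4] at hd
      have : i' = i := Nat.cast_inj.mp hd
      subst this
      exact ⟨h1, h2, j, h3, h4, hzv⟩
  have hsucc : ∀ n i j, 1 ≤ i → i ≤ n → 0 < j → j < len n i → x.1 n = vtx n i j →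
      (f x).1 n = vtx n i (j + 1) := by
    intro n i j h1 h2 h3 h4 hx
    have hn1 : 1 ≤ n := le_trans h1 h2
    rcases (hE n hn1 _ _).mp (hEy n) with ⟨hu, _⟩ | ⟨i', j', h1', h2', h4', hu, hv⟩
    · exact absurd (hx.symm.trans hu) (hne n i j h1 h2 h3 h4)
    · have h3' : 0 < j' := by
        rcases Nat.eq_zero_or_pos j' with rfl | h
        · exact absurd ((hx.symm.trans hu).trans (hends n i' h1' h2').1)
            (hne n i j h1 h2 h3 h4)
        · exact h
      obtain ⟨hi, hj⟩ := hinj n i j i' j' h1 h2 h1' h2' h3 h4 h3' h4' (hx.symm.trans hu)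
      rw [hv, ← hi, ← hj]
  have hsucc0 : ∀ n, 1 ≤ n → x.1 n = v0 n →
      (f x).1 n = v0 n ∨ ∃ i, 1 ≤ i ∧ i ≤ n ∧ (f x).1 n = vtx n i 1 := by
    intro n hn hx
    rcases (hE n hn _ _).mp (hEy n) with ⟨_, hv⟩ | ⟨i, j, h1, h2, h4, hu, hv⟩
    · exact Or.inl hv
    · rcases Nat.eq_zero_or_pos j with rfl | hj
      · exact Or.inr ⟨i, h1, h2, hv⟩
      · exact absurd (hu.symm.trans hx) (hne n i j h1 h2 hj h4)
  by_cases hTop : (⨅ n, degv n (x.1 n)) = ⊤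
  · rw [hTop]
    have hx0 : ∀ n, 1 ≤ n → x.1 n = v0 n := by
      intro n hn
      refine hdeg_top n _ hn (le_antisymm le_top ?_)
      rw [← hTop]
      exact iInf_le _ n
    by_contra hb
    obtain ⟨i, hbi⟩ := WithTop.ne_top_iff_exists.mp hb
    obtain ⟨N, hN⟩ := hEvent (f x) i hbi.symm
    set n := max N (i + 1) with hn
    have hn1 : 1 ≤ n := by omega
    obtain ⟨h1i, hin1, j, hj0, hjl, hyv⟩ :=
      hshape (f x) i (n + 1) (by omega) (hN (n + 1) (by omega))
    rcases hsucc0 (n + 1) (by omega) (hx0 (n + 1) (by omega)) with h0 | ⟨i'', h1'', h2'', hv1⟩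
    · exact hne (n + 1) i j h1i hin1 hj0 hjl (hyv.symm.trans h0)
    · have heq : vtx (n + 1) i j = vtx (n + 1) i'' 1 := hyv.symm.trans hv1
      have hl2 : 1 < len (n + 1) i'' :=
        lt_of_lt_of_le one_lt_two (hlen2 (n + 1) i'' h1'' h2'')
      obtain ⟨hii, hj1⟩ := hinj (n + 1) i j i'' 1 h1i hin1 h1'' h2'' hj0 hjl one_pos hl2 heq
      have hiln : i ≤ n := by omega
      have h1len : 1 < len (n + 1) i := hj1 ▸ hjl
      have hyn : (f x).1 n = v0 n := by
        rw [← (f x).2 n, hyv, hj1, hW n i 1 h1i hiln h1len]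
        exact (walkL_getElem_one (v0 n) (vtx n) (len n) i n hiln
          (by have := hlen2 n i h1i hiln; omega)
          (by rw [hWlen n i h1i hiln]; omega)).trans (hends n i h1i hiln).1
      have hdn := hN n (by omega)
      rw [hyn, hdegv0] at hdn
      exact absurd hdn.symm (by simp)
  · obtain ⟨i, hai⟩ := WithTop.ne_top_iff_exists.mp hTop
    obtain ⟨N, hN⟩ := hEvent x i hai.symm
    have h1i : 1 ≤ i := (hshape x i (max N 1) (by omega) (hN _ (by omega))).1
    set M := max N i with hM
    have hMN : N ≤ M := le_max_left _ _
    have hiM : i ≤ M := le_max_right _ _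
    obtain ⟨_, hiM1, j, hj0, hjl, hxv⟩ :=
      hshape x i (M + 1) (by omega) (hN (M + 1) (by omega))
    have hble : (⨅ n, degv n ((f x).1 n)) ≤ (i : ℕ∞) := by
      by_cases hjlast : j + 1 < len (M + 1) i
      · have hyv := hsucc (M + 1) i j h1i hiM1 hj0 hjl hxv
        have hdy : degv (M + 1) ((f x).1 (M + 1)) = (i : ℕ∞) := by
          rw [hyv, hdegvi (M + 1) i (j + 1) h1i hiM1 (by omega) hjlast]
        rw [← hdy]
        exact iInf_le _ (M + 1)
      · exfalso
        have hxn : x.1 M = v0 M := by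
          rw [← x.2 M, hxv, hW M i j h1i hiM hjl]
          exact walkL_getElem_last _ _ _ _ _ (by rw [hWlen M i h1i hiM]; omega)
        have hdM := hN M hMN
        rw [hxn, hdegv0] at hdM
        exact absurd hdM.symm (by simp)
    have htail : ∀ m, M ≤ m → (i : ℕ∞) ≤ degv m ((f x).1 m) := by
      intro m hm
      obtain ⟨_, him, j', hj0', hjl', hxv'⟩ :=
        hshape x i m (by omega) (hN m (by omega))
      have hyv := hsucc m i j' h1i him hj0' hjl' hxv'
      by_cases hlt : j' + 1 < len m i
      · rw [hyv, hdegvi m i (j' + 1) h1i him (by omega) hlt]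
      · have hlast : j' + 1 = len m i := by omega
        have hv0 : vtx m i (j' + 1) = v0 m := by
          rw [hlast]
          exact (hends m i h1i him).2
        rw [hyv, hv0, hdegv0]
        exact le_top
    have hib : (i : ℕ∞) ≤ ⨅ n, degv n ((f x).1 n) := by
      refine le_iInf fun n => ?_
      exact le_trans (htail (max n M) (le_max_right _ _)) (hAnti (f x) (le_max_left n M))
    rw [← hai]
    exact le_antisymm hble hib
end
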